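/- arXiv:2407.16808 — 9 statements merged into one kernel-verified Lean document; each statement's English description precedes it below -/
import Mathlib

section
/- Let l, r be positive integers, let A be an l×r matrix with entries a_{ji} ∈ {0,1}, let d_1,…,d_l > 0, and let c_1,…,c_r ∈ (0,1). For y ∈ ℝ^r write ⟨A_j, e^y⟩ := ∑_{i=1}^r a_{ji} e^{y_i}, w_j(y) := 1 − ⟨A_j, e^y⟩/d_j, and u_i(y) := ∏_{j : a_{ji}=1} w_j(y). Then the set S := { y ∈ ℝ^r : ⟨A_j, e^y⟩ < d_j for all j ∈ [l], and u_i(y) > c_i for all i ∈ [r] } is a convex subset of ℝ^r. -/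
/-- the feasible region `S` of the transformed QNUM problem is convex. -/
theorem qnum_feasible_region_convex
    (l r : ℕ) (hl : 0 < l) (hr : 0 < r)
    (A : Fin l → Fin r → ℝ) (hA : ∀ j i, A j i = 0 ∨ A j i = 1)
    (d : Fin l → ℝ) (hd : ∀ j, 0 < d j)
    (c : Fin r → ℝ) (hc : ∀ i, c i ∈ Set.Ioo (0 : ℝ) 1) :
    Convex ℝ { y : Fin r → ℝ |
      (∀ j, ∑ i, A j i * Real.exp (y i) < d j) ∧
      (∀ i, c i < ∏ j ∈ Finset.univ.filter (fun j => A j i = 1),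
          (1 - (∑ k, A j k * Real.exp (y k)) / d j)) } := by
  intro x hx y hy a b ha hb hab
  obtain ⟨hx1, hx2⟩ := hx
  obtain ⟨hy1, hy2⟩ := hy
  have hAnn : ∀ j i, 0 ≤ A j i := by
    intro j i; rcases hA j i with h | h <;> simp [h]
  -- key convexity estimate on each sum
  have key : ∀ j, ∑ i, A j i * Real.exp ((a • x + b • y) i)
      ≤ a * (∑ i, A j i * Real.exp (x i)) + b * (∑ i, A j i * Real.exp (y i)) := by
    intro j
    rw [Finset.mul_sum, Finset.mul_sum, ← Finset.sum_add_distrib]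
    apply Finset.sum_le_sum
    intro i _
    have hexp : Real.exp (a * x i + b * y i)
        ≤ a * Real.exp (x i) + b * Real.exp (y i) := by
      have h1 : Real.exp (a * x i + b * y i)
          = Real.exp (x i) ^ a * Real.exp (y i) ^ b := by
        rw [Real.exp_add, mul_comm a, mul_comm b, Real.exp_mul, Real.exp_mul]
      rw [h1]
      exact Real.geom_mean_le_arith_mean2_weighted ha hb
        (Real.exp_pos _).le (Real.exp_pos _).le hab
    calc A j i * Real.exp ((a • x + b • y) i)
        = A j i * Real.exp (a * x i + b * y i) := by simp [Pi.add_apply]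
      _ ≤ A j i * (a * Real.exp (x i) + b * Real.exp (y i)) :=
          mul_le_mul_of_nonneg_left hexp (hAnn j i)
      _ = a * (A j i * Real.exp (x i)) + b * (A j i * Real.exp (y i)) := by ring
  constructor
  · intro j
    calc ∑ i, A j i * Real.exp ((a • x + b • y) i)
        ≤ a * (∑ i, A j i * Real.exp (x i)) + b * (∑ i, A j i * Real.exp (y i)) := key j
      _ < a * d j + b * d j := by
          rcases eq_or_lt_of_le ha with h | h
          · rcases eq_or_lt_of_le hb with h' | h'
            · exfalso; rw [← h, ← h'] at hab; norm_num at hab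
            · rw [← h]; simpa using mul_lt_mul_of_pos_left (hy1 j) h'
          · rcases eq_or_lt_of_le hb with h' | h'
            · rw [← h']; simpa using mul_lt_mul_of_pos_left (hx1 j) h
            · exact add_lt_add (mul_lt_mul_of_pos_left (hx1 j) h)
                (mul_lt_mul_of_pos_left (hy1 j) h')
      _ = d j := by rw [← add_mul, hab, one_mul]
  · intro i
    set wz := fun j => 1 - (∑ k, A j k * Real.exp ((a • x + b • y) k)) / d j with hwz
    set wx := fun j => 1 - (∑ k, A j k * Real.exp (x k)) / d j with hwx
    set wy := fun j => 1 - (∑ k, A j k * Real.exp (y k)) / d j with hwy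
    have hwxpos : ∀ j, 0 < wx j := by
      intro j
      have := hx1 j
      have : (∑ k, A j k * Real.exp (x k)) / d j < 1 := (div_lt_one (hd j)).2 this
      simpa [hwx] using sub_pos.2 this
    have hwypos : ∀ j, 0 < wy j := by
      intro j
      have := hy1 j
      have : (∑ k, A j k * Real.exp (y k)) / d j < 1 := (div_lt_one (hd j)).2 this
      simpa [hwy] using sub_pos.2 this
    have hstep : ∀ j, wx j ^ a * wy j ^ b ≤ wz j := by
      intro j
      have h1 : wx j ^ a * wy j ^ b ≤ a * wx j + b * wy j :=
        Real.geom_mean_le_arith_mean2_weighted ha hb (hwxpos j).le (hwypos j).le hab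
      have h2 : a * wx j + b * wy j ≤ wz j := by
        have hk := key j
        have hdj := hd j
        have hdiv : (∑ k, A j k * Real.exp ((a • x + b • y) k)) / d j
            ≤ a * ((∑ k, A j k * Real.exp (x k)) / d j)
              + b * ((∑ k, A j k * Real.exp (y k)) / d j) := by
          rw [← mul_div_assoc, ← mul_div_assoc, ← add_div]
          gcongr
        simp only [hwx, hwy, hwz]
        rw [mul_one_sub, mul_one_sub]
        linarith
      linarith
    have hprod : (∏ j ∈ Finset.univ.filter (fun j => A j i = 1), wx j) ^ a
        * (∏ j ∈ Finset.univ.filter (fun j => A j i = 1), wy j) ^ b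
        ≤ ∏ j ∈ Finset.univ.filter (fun j => A j i = 1), wz j := by
      rw [← Real.finset_prod_rpow _ _ (fun j _ => (hwxpos j).le) a,
          ← Real.finset_prod_rpow _ _ (fun j _ => (hwypos j).le) b,
          ← Finset.prod_mul_distrib]
      apply Finset.prod_le_prod
      · intro j _
        exact mul_nonneg (Real.rpow_nonneg (hwxpos j).le a) (Real.rpow_nonneg (hwypos j).le b)
      · intro j _; exact hstep j
    have hPx : c i < ∏ j ∈ Finset.univ.filter (fun j => A j i = 1), wx j := hx2 i
    have hPy : c i < ∏ j ∈ Finset.univ.filter (fun j => A j i = 1), wy j := hy2 i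
    have hci : 0 < c i := (hc i).1
    have hfinal : c i < (∏ j ∈ Finset.univ.filter (fun j => A j i = 1), wx j) ^ a
        * (∏ j ∈ Finset.univ.filter (fun j => A j i = 1), wy j) ^ b := by
      rcases eq_or_lt_of_le ha with h | h
      · have hb1 : b = 1 := by linarith
        rw [← h, hb1]; simpa using hPy
      · have hsplit : c i = c i ^ a * c i ^ b := by
          rw [← Real.rpow_add hci, hab, Real.rpow_one]
        rw [hsplit]
        have h1 : c i ^ a < (∏ j ∈ Finset.univ.filter (fun j => A j i = 1), wx j) ^ a :=
          Real.rpow_lt_rpow hci.le hPx h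
        have h2 : c i ^ b ≤ (∏ j ∈ Finset.univ.filter (fun j => A j i = 1), wy j) ^ b :=
          Real.rpow_le_rpow hci.le hPy.le hb
        have hcb : 0 < c i ^ b := Real.rpow_pos_of_pos hci b
        calc c i ^ a * c i ^ b
            < (∏ j ∈ Finset.univ.filter (fun j => A j i = 1), wx j) ^ a * c i ^ b :=
              mul_lt_mul_of_pos_right h1 hcb
          _ ≤ _ := mul_le_mul_of_nonneg_left h2 (Real.rpow_pos_of_pos ((hci.trans hPx)) a).le
    exact lt_of_lt_of_le hfinal hprod
end

section
/- Let l, r be positive integers, let A be an l×r matrix with entries a_{ji} ∈ {0,1}, and let d_1,…,d_l > 0. For y ∈ ℝ^r write ⟨A_j, e^y⟩ := ∑_{i=1}^r a_{ji} e^{y_i} and T := { y ∈ ℝ^r : ⟨A_j, e^y⟩ < d_j for all j }. Then for each i ∈ [r], the function y ↦ ∑_{j=1}^l a_{ji} · ln(1 − ⟨A_j, e^y⟩/d_j) is concave on T; equivalently, the logarithm of the end-to-end Werner parameter u_i(y) = ∏_{j : a_{ji}=1} (1 − ⟨A_j, e^y⟩/d_j) is concave on T. -/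
open Real Set

/-- A finite sum of concave functions is concave. -/
lemma concaveOn_finset_sum {E : Type*} [AddCommGroup E] [Module ℝ E]
    {ι : Type*} (t : Finset ι) {s : Set E} (hs : Convex ℝ s)
    {f : ι → E → ℝ} (h : ∀ j ∈ t, ConcaveOn ℝ s (f j)) :
    ConcaveOn ℝ s (fun y => ∑ j ∈ t, f j y) := by
  classical
  induction t using Finset.induction with
  | empty => simpa using concaveOn_const 0 hs
  | @insert a t' hj ih =>
    simp only [Finset.sum_insert hj]
    exact ((h a (Finset.mem_insert_self a t')).add
      (ih fun j hjt => h j (Finset.mem_insert_of_mem hjt)))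

/-- log of a positive concave function is concave. -/
lemma concaveOn_log_comp {E : Type*} [AddCommGroup E] [Module ℝ E]
    {s : Set E} {f : E → ℝ} (hf : ConcaveOn ℝ s f) (hpos : ∀ y ∈ s, 0 < f y) :
    ConcaveOn ℝ s (fun y => Real.log (f y)) := by
  refine ⟨hf.1, fun x hx y hy a b ha hb hab => ?_⟩
  have hfx := hpos x hx
  have hfy := hpos y hy
  have hcomb : 0 < a * f x + b * f y := by
    rcases eq_or_lt_of_le ha with h | h
    · have hb1 : b = 1 := by linarith
      simp [← h, hb1]; exact hfy
    · have h1 : 0 < a * f x := mul_pos h hfx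
      have h2 : 0 ≤ b * f y := mul_nonneg hb hfy.le
      linarith
  have h1 : a • Real.log (f x) + b • Real.log (f y) ≤ Real.log (a * f x + b * f y) :=
    strictConcaveOn_log_Ioi.concaveOn.2 hfx hfy ha hb hab
  have h2 : a * f x + b * f y ≤ f (a • x + b • y) := hf.2 hx hy ha hb hab
  exact h1.trans (Real.log_le_log hcomb h2)

/-- the logarithm of the end-to-end Werner parameter of each route,
`y ↦ ∑_j a_{ji} ln(1 − ⟨A_j, e^y⟩/d_j)`, is concave on
`T = {y : ⟨A_j, e^y⟩ < d_j ∀ j}`. -/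
theorem log_e2e_werner_param_concave
    (l r : ℕ) (hl : 0 < l) (hr : 0 < r)
    (A : Fin l → Fin r → ℝ) (hA : ∀ j i, A j i = 0 ∨ A j i = 1)
    (d : Fin l → ℝ) (hd : ∀ j, 0 < d j) (i : Fin r) :
    ConcaveOn ℝ { y : Fin r → ℝ | ∀ j, ∑ k, A j k * Real.exp (y k) < d j }
      (fun y => ∑ j, A j i * Real.log (1 - (∑ k, A j k * Real.exp (y k)) / d j)) := by
  set T : Set (Fin r → ℝ) := { y | ∀ j, ∑ k, A j k * Real.exp (y k) < d j } with hT
  have hA0 : ∀ j k, 0 ≤ A j k := fun j k => by rcases hA j k with h | h <;> simp [h]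
  set g : Fin l → (Fin r → ℝ) → ℝ := fun j y => ∑ k, A j k * Real.exp (y k) with hg
  -- convexity of g j on univ
  have hgconv : ∀ j, ConvexOn ℝ (univ : Set (Fin r → ℝ)) (g j) := by
    intro j
    refine ⟨convex_univ, fun x _ y _ a b ha hb hab => ?_⟩
    simp only [hg, smul_eq_mul, Finset.mul_sum]
    rw [← Finset.sum_add_distrib]
    refine Finset.sum_le_sum fun k _ => ?_
    have hexp : Real.exp (a * x k + b * y k) ≤ a * Real.exp (x k) + b * Real.exp (y k) := by
      have := convexOn_exp.2 (mem_univ (x k)) (mem_univ (y k)) ha hb hab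
      simpa using this
    have : (a • x + b • y) k = a * x k + b * y k := by simp
    rw [this]
    calc A j k * Real.exp (a * x k + b * y k)
        ≤ A j k * (a * Real.exp (x k) + b * Real.exp (y k)) :=
          mul_le_mul_of_nonneg_left hexp (hA0 j k)
      _ = a * (A j k * Real.exp (x k)) + b * (A j k * Real.exp (y k)) := by ring
  -- convexity of T
  have hTconv : Convex ℝ T := by
    intro x hx y hy a b ha hb hab
    intro j
    have hgle : g j (a • x + b • y) ≤ a * g j x + b * g j y := by
      simpa using (hgconv j).2 (mem_univ x) (mem_univ y) ha hb hab
    have hx' : g j x < d j := hx j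
    have hy' : g j y < d j := hy j
    have : a * g j x + b * g j y < d j := by
      rcases eq_or_lt_of_le ha with h | h
      · have hb1 : b = 1 := by linarith
        simp [← h, hb1]; exact hy'
      · have hdd : a * d j + b * d j = d j := by rw [← add_mul, hab, one_mul]
        linarith [mul_lt_mul_of_pos_left hx' h, mul_le_mul_of_nonneg_left hy'.le hb]
    exact lt_of_le_of_lt hgle this
  -- concavity of f j = 1 - g j / d j on T
  have hfconc : ∀ j, ConcaveOn ℝ T (fun y => 1 - g j y / d j) := by
    intro j
    have hdiv : ConvexOn ℝ T (fun y => (1 / d j) • g j y) :=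
      (((hgconv j).subset (subset_univ T) hTconv)).smul (one_div_nonneg.2 (hd j).le)
    have := (concaveOn_const (1 : ℝ) hTconv).sub hdiv
    refine this.congr fun y _ => ?_
    simp [smul_eq_mul]; ring
  have hfpos : ∀ j, ∀ y ∈ T, 0 < 1 - g j y / d j := by
    intro j y hy
    have : g j y / d j < 1 := (div_lt_one (hd j)).2 (hy j)
    linarith
  refine concaveOn_finset_sum Finset.univ hTconv fun j _ => ?_
  have := (concaveOn_log_comp (hfconc j) (hfpos j)).smul (hA0 j i)
  simpa [smul_eq_mul] using this
end

section
/- Let l, r be positive integers, let A be an l×r matrix with entries a_{ji} ∈ {0,1}, let d_1,…,d_l > 0, and fix i ∈ [r] with at least one j such that a_{ji} = 1. For y ∈ ℝ^r write ⟨A_j, e^y⟩ := ∑_{k=1}^r a_{jk} e^{y_k}, w_j(y) := 1 − ⟨A_j, e^y⟩/d_j, u_i(y) := ∏_{j : a_{ji}=1} w_j(y), T := { y ∈ ℝ^r : ⟨A_j, e^y⟩ < d_j for all j }, and S_i := { y ∈ T : u_i(y) > c }. If c ≥ 1/2, then u_i is concave on S_i. -/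
open Finset Real
open Finset Real

lemma aux_one_add_sum_le_prod {ι : Type*} (J : Finset ι) (f : ι → ℝ)
    (hf : ∀ j ∈ J, 0 ≤ f j) : 1 + ∑ j ∈ J, f j ≤ ∏ j ∈ J, (1 + f j) := by
  classical
  induction J using Finset.induction_on with
  | empty => simp
  | @insert a s ha ih =>
    have hfa : 0 ≤ f a := hf a (Finset.mem_insert_self a s)
    have hfs : ∀ j ∈ s, 0 ≤ f j := fun j hj => hf j (Finset.mem_insert_of_mem hj)
    have ih' := ih hfs
    have hsum : 0 ≤ ∑ j ∈ s, f j := Finset.sum_nonneg hfs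
    rw [Finset.sum_insert ha, Finset.prod_insert ha]
    nlinarith

lemma cs_aux {κ : Type*} (s : Finset κ) (C v : κ → ℝ) (hC : ∀ k ∈ s, 0 ≤ C k) :
    (∑ k ∈ s, C k * v k) ^ 2 ≤ (∑ k ∈ s, C k) * ∑ k ∈ s, C k * v k ^ 2 := by
  have h := Finset.sum_mul_sq_le_sq_mul_sq s (fun k => Real.sqrt (C k))
      (fun k => Real.sqrt (C k) * v k)
  have e1 : ∑ k ∈ s, Real.sqrt (C k) * (Real.sqrt (C k) * v k) = ∑ k ∈ s, C k * v k := by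
    refine Finset.sum_congr rfl fun k hk => ?_
    rw [← mul_assoc, Real.mul_self_sqrt (hC k hk)]
  have e2 : ∑ k ∈ s, Real.sqrt (C k) ^ 2 = ∑ k ∈ s, C k := by
    refine Finset.sum_congr rfl fun k hk => ?_
    rw [Real.sq_sqrt (hC k hk)]
  have e3 : ∑ k ∈ s, (Real.sqrt (C k) * v k) ^ 2 = ∑ k ∈ s, C k * v k ^ 2 := by
    refine Finset.sum_congr rfl fun k hk => ?_
    rw [mul_pow, Real.sq_sqrt (hC k hk)]
  rw [e1, e2, e3] at h
  exact h

lemma hasDerivAt_expsum {r : ℕ} (C v : Fin r → ℝ) (t : ℝ) :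
    HasDerivAt (fun t => ∑ k, C k * Real.exp (t * v k))
      (∑ k, C k * v k * Real.exp (t * v k)) t := by
  have h : ∀ k ∈ Finset.univ (α := Fin r),
      HasDerivAt (fun t => C k * Real.exp (t * v k)) (C k * v k * Real.exp (t * v k)) t := by
    intro k _
    have h1 : HasDerivAt (fun x : ℝ => x * v k) (v k) t := hasDerivAt_mul_const (v k)
    have h2 := h1.exp.const_mul (C k)
    have h3 : C k * v k * Real.exp (t * v k) = C k * (Real.exp (t * v k) * v k) := by ring
    rw [h3]; exact h2
  exact HasDerivAt.fun_sum h
lemma phi2_nonpos {ι : Type*} [DecidableEq ι] (J : Finset ι) (w m q : ι → ℝ)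
    (hw0 : ∀ j ∈ J, 0 < w j) (hw1 : ∀ j ∈ J, w j ≤ 1)
    (hq : ∀ j ∈ J, 0 ≤ q j)
    (hcs : ∀ j ∈ J, m j ^ 2 ≤ (1 - w j) * q j)
    (hu : 1 / 2 ≤ ∏ j ∈ J, w j) :
    ∑ j ∈ J, ((∑ j' ∈ J.erase j, (∏ k ∈ (J.erase j).erase j', w k) * (-(m j'))) * (-(m j))
      + (∏ k ∈ J.erase j, w k) * (-(q j))) ≤ 0 := by
  classical
  set u : ℝ := ∏ j ∈ J, w j with hudef
  have hu0 : 0 < u := Finset.prod_pos hw0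
  set g : ι → ℝ := fun j => m j / w j with hgdef
  set rr : ι → ℝ := fun j => q j / w j with hrdef
  set α : ι → ℝ := fun j => (1 - w j) / w j with hadef
  set G : ℝ := ∑ j ∈ J, g j with hGdef
  -- rewrite each summand
  have step1 : ∀ j ∈ J,
      (∑ j' ∈ J.erase j, (∏ k ∈ (J.erase j).erase j', w k) * (-(m j'))) * (-(m j))
        + (∏ k ∈ J.erase j, w k) * (-(q j))
      = u * (g j * (G - g j)) - u * rr j := by
    intro j hj
    have hwj : w j ≠ 0 := (hw0 j hj).ne'
    have hpe : w j * ∏ k ∈ J.erase j, w k = u := Finset.mul_prod_erase J w hj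
    have hinner : ∑ j' ∈ J.erase j, (∏ k ∈ (J.erase j).erase j', w k) * (-(m j'))
        = -((∏ k ∈ J.erase j, w k) * ∑ j' ∈ J.erase j, g j') := by
      rw [Finset.mul_sum, ← Finset.sum_neg_distrib]
      refine Finset.sum_congr rfl fun j' hj' => ?_
      have hj'J : j' ∈ J := Finset.mem_of_mem_erase hj'
      have hwj' : w j' ≠ 0 := (hw0 j' hj'J).ne'
      have hpe' : w j' * ∏ k ∈ (J.erase j).erase j', w k = ∏ k ∈ J.erase j, w k :=
        Finset.mul_prod_erase _ _ hj'
      rw [hgdef]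
      field_simp
      linear_combination (-(m j')) * hpe'
    rw [hinner]
    have hsub : ∑ j' ∈ J.erase j, g j' = G - g j := by
      rw [hGdef]
      exact Finset.sum_erase_eq_sub hj
    rw [hsub]
    simp only [hgdef, hrdef]
    rw [← hpe]
    field_simp
    ring
  rw [Finset.sum_congr rfl step1]
  rw [Finset.sum_sub_distrib, ← Finset.mul_sum, ← Finset.mul_sum]
  have hq2 : ∀ j ∈ J, 0 ≤ rr j := fun j hj => div_nonneg (hq j hj) (hw0 j hj).le
  have hα0 : ∀ j ∈ J, 0 ≤ α j := fun j hj =>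
    div_nonneg (by linarith [hw1 j hj]) (hw0 j hj).le
  have hg2 : ∀ j ∈ J, g j ^ 2 ≤ α j * rr j := by
    intro j hj
    have hww : (0:ℝ) < w j ^ 2 := pow_pos (hw0 j hj) 2
    have hwj : w j ≠ 0 := (hw0 j hj).ne'
    have h1 : α j * rr j = ((1 - w j) * q j) / (w j ^ 2) := by
      simp only [hadef, hrdef]; rw [div_mul_div_comm, sq]
    have h2 : g j ^ 2 = m j ^ 2 / (w j ^ 2) := by
      simp only [hgdef]; rw [div_pow]
    rw [h1, h2]
    exact div_le_div_of_nonneg_right (hcs j hj) hww.le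
  -- sum of alphas ≤ 1
  have hαsum : ∑ j ∈ J, α j ≤ 1 := by
    have h1 := aux_one_add_sum_le_prod J α hα0
    have h2 : ∏ j ∈ J, (1 + α j) = u⁻¹ := by
      rw [hudef, ← Finset.prod_inv_distrib]
      refine Finset.prod_congr rfl fun j hj => ?_
      have hwj : w j ≠ 0 := (hw0 j hj).ne'
      rw [hadef]; field_simp; ring
    have h3 : u⁻¹ ≤ 2 := by
      have : u * u⁻¹ = 1 := mul_inv_cancel₀ hu0.ne'
      nlinarith
    linarith
  -- main estimate
  have hGsq : G ^ 2 ≤ ∑ j ∈ J, rr j := by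
    have s1 : G ^ 2 ≤ (∑ j ∈ J, |g j|) ^ 2 := by
      rw [← sq_abs]
      exact pow_le_pow_left₀ (abs_nonneg _) (Finset.abs_sum_le_sum_abs _ _) 2
    have s2 : (∑ j ∈ J, |g j|) ^ 2 ≤ (∑ j ∈ J, Real.sqrt (α j) * Real.sqrt (rr j)) ^ 2 := by
      refine pow_le_pow_left₀ (Finset.sum_nonneg fun j _ => abs_nonneg _) ?_ 2
      refine Finset.sum_le_sum fun j hj => ?_
      rw [← Real.sqrt_mul (hα0 j hj)]
      rw [← Real.sqrt_sq_eq_abs]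
      exact Real.sqrt_le_sqrt (hg2 j hj)
    have s3 : (∑ j ∈ J, Real.sqrt (α j) * Real.sqrt (rr j)) ^ 2
        ≤ (∑ j ∈ J, α j) * ∑ j ∈ J, rr j := by
      have h := Finset.sum_mul_sq_le_sq_mul_sq J (fun j => Real.sqrt (α j))
        (fun j => Real.sqrt (rr j))
      have e1 : ∑ j ∈ J, Real.sqrt (α j) ^ 2 = ∑ j ∈ J, α j :=
        Finset.sum_congr rfl fun j hj => Real.sq_sqrt (hα0 j hj)
      have e2 : ∑ j ∈ J, Real.sqrt (rr j) ^ 2 = ∑ j ∈ J, rr j :=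
        Finset.sum_congr rfl fun j hj => Real.sq_sqrt (hq2 j hj)
      rw [e1, e2] at h
      exact h
    have s4 : (∑ j ∈ J, α j) * ∑ j ∈ J, rr j ≤ ∑ j ∈ J, rr j :=
      mul_le_of_le_one_left (Finset.sum_nonneg hq2) hαsum
    linarith
  have hsum_expand : ∑ j ∈ J, g j * (G - g j) = G ^ 2 - ∑ j ∈ J, g j ^ 2 := by
    rw [Finset.sum_congr rfl (fun j (_ : j ∈ J) => (by ring : g j * (G - g j) = g j * G - g j ^ 2)),
      Finset.sum_sub_distrib, ← Finset.sum_mul, ← hGdef]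
    ring
  rw [hsum_expand]
  have hgsq : 0 ≤ ∑ j ∈ J, g j ^ 2 := Finset.sum_nonneg fun j _ => sq_nonneg _
  have hX : G ^ 2 - ∑ j ∈ J, g j ^ 2 - ∑ j ∈ J, rr j ≤ 0 := by linarith
  nlinarith [mul_le_mul_of_nonneg_left hX hu0.le]
theorem seg_concave {r : ℕ} {ι : Type*} [DecidableEq ι] (J : Finset ι)
    (C : ι → Fin r → ℝ) (hC : ∀ j k, 0 ≤ C j k) (v : Fin r → ℝ)
    (D : Set ℝ) (hD : Convex ℝ D)
    (hmem : ∀ t ∈ D, (∀ j ∈ J, 0 < 1 - ∑ k, C j k * Real.exp (t * v k)) ∧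
      1 / 2 ≤ ∏ j ∈ J, (1 - ∑ k, C j k * Real.exp (t * v k))) :
    ConcaveOn ℝ D (fun t => ∏ j ∈ J, (1 - ∑ k, C j k * Real.exp (t * v k))) := by
  classical
  set W : ι → ℝ → ℝ := fun j t => 1 - ∑ k, C j k * Real.exp (t * v k) with hWdef
  set E1 : ι → ℝ → ℝ := fun j t => ∑ k, C j k * v k * Real.exp (t * v k) with hE1def
  set E2 : ι → ℝ → ℝ := fun j t => ∑ k, C j k * v k * v k * Real.exp (t * v k) with hE2def
  have hW : ∀ j t, HasDerivAt (W j) (-(E1 j t)) t := by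
    intro j t
    exact (hasDerivAt_expsum (C j) v t).const_sub 1
  have hE1d : ∀ j t, HasDerivAt (E1 j) (E2 j t) t := by
    intro j t
    have h := hasDerivAt_expsum (fun k => C j k * v k) v t
    exact h
  set φ : ℝ → ℝ := fun t => ∏ j ∈ J, W j t with hφdef
  set φ₁ : ℝ → ℝ := fun t => ∑ j ∈ J, (∏ k ∈ J.erase j, W k t) * (-(E1 j t)) with hφ₁def
  set φ₂ : ℝ → ℝ := fun t => ∑ j ∈ J,
      ((∑ j' ∈ J.erase j, (∏ k ∈ (J.erase j).erase j', W k t) * (-(E1 j' t))) * (-(E1 j t))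
        + (∏ k ∈ J.erase j, W k t) * (-(E2 j t))) with hφ₂def
  have hφd : ∀ t, HasDerivAt φ (φ₁ t) t := by
    intro t
    have h := HasDerivAt.fun_finsetProd (u := J) (f := fun j => W j)
      (f' := fun j => -(E1 j t)) (x := t) (fun j _ => hW j t)
    simpa only [smul_eq_mul] using h
  have hφ₁d : ∀ t, HasDerivAt φ₁ (φ₂ t) t := by
    intro t
    apply HasDerivAt.fun_sum
    intro j _
    have hp := HasDerivAt.fun_finsetProd (u := J.erase j) (f := fun j => W j)
      (f' := fun j' => -(E1 j' t)) (x := t) (fun j' _ => hW j' t)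
    have hn : HasDerivAt (fun t => -(E1 j t)) (-(E2 j t)) t := (hE1d j t).neg
    have h := HasDerivAt.fun_mul hp hn
    simpa only [smul_eq_mul] using h
  have hderiv1 : deriv φ = φ₁ := funext fun t => (hφd t).deriv
  have hderiv2 : ∀ t, deriv (deriv φ) t = φ₂ t := by
    intro t; rw [hderiv1]; exact (hφ₁d t).deriv
  apply concaveOn_of_deriv2_nonpos hD
  · exact (Differentiable.continuous fun t => (hφd t).differentiableAt).continuousOn
  · exact fun t _ => (hφd t).differentiableAt.differentiableWithinAt
  · rw [hderiv1]; exact fun t _ => (hφ₁d t).differentiableAt.differentiableWithinAt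
  · intro t ht
    have ht' : t ∈ D := interior_subset ht
    obtain ⟨hpos, hprod⟩ := hmem t ht'
    have h2 : deriv^[2] φ t = φ₂ t := by
      rw [show (deriv^[2] φ) = deriv (deriv φ) from rfl]
      exact hderiv2 t
    rw [h2]
    apply phi2_nonpos J (fun j => W j t) (fun j => E1 j t) (fun j => E2 j t)
    · exact fun j hj => hpos j hj
    · intro j hj
      simp only [hWdef]
      have : (0:ℝ) ≤ ∑ k, C j k * Real.exp (t * v k) :=
        Finset.sum_nonneg fun k _ => mul_nonneg (hC j k) (Real.exp_pos _).le
      linarith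
    · intro j hj
      simp only [hE2def]
      exact Finset.sum_nonneg fun k _ => by
        have : C j k * v k * v k = C j k * (v k * v k) := by ring
        rw [this]
        exact mul_nonneg (mul_nonneg (hC j k) (mul_self_nonneg _)) (Real.exp_pos _).le
    · intro j hj
      have h := cs_aux (Finset.univ (α := Fin r)) (fun k => C j k * Real.exp (t * v k)) v
        (fun k _ => mul_nonneg (hC j k) (Real.exp_pos _).le)
      have e1 : ∑ k, C j k * Real.exp (t * v k) * v k = E1 j t := by
        simp only [hE1def]; exact Finset.sum_congr rfl fun k _ => by ring
      have e2 : ∑ k, C j k * Real.exp (t * v k) * v k ^ 2 = E2 j t := by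
        simp only [hE2def]; exact Finset.sum_congr rfl fun k _ => by ring
      rw [e1, e2] at h
      have e3 : 1 - W j t = ∑ k, C j k * Real.exp (t * v k) := by
        simp only [hWdef]; ring
      rw [e3]
      exact h
    · exact hprod
lemma expsum_combo {r : ℕ} (B : Fin r → ℝ) (hB : ∀ k, 0 ≤ B k) (y z : Fin r → ℝ)
    {a b : ℝ} (ha : 0 ≤ a) (hb : 0 ≤ b) (hab : a + b = 1) :
    ∑ k, B k * Real.exp (a * y k + b * z k)
      ≤ a * (∑ k, B k * Real.exp (y k)) + b * (∑ k, B k * Real.exp (z k)) := by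
  have hexp : ∀ k, Real.exp (a * y k + b * z k) ≤ a * Real.exp (y k) + b * Real.exp (z k) := by
    intro k
    have := convexOn_exp.2 (Set.mem_univ (y k)) (Set.mem_univ (z k)) ha hb hab
    simpa [smul_eq_mul] using this
  calc ∑ k, B k * Real.exp (a * y k + b * z k)
      ≤ ∑ k, B k * (a * Real.exp (y k) + b * Real.exp (z k)) :=
        Finset.sum_le_sum fun k _ => mul_le_mul_of_nonneg_left (hexp k) (hB k)
    _ = a * (∑ k, B k * Real.exp (y k)) + b * (∑ k, B k * Real.exp (z k)) := by
        rw [Finset.mul_sum, Finset.mul_sum, ← Finset.sum_add_distrib]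
        exact Finset.sum_congr rfl fun k _ => by ring

lemma combo_lt {sy sz a b D : ℝ} (h1 : sy < D) (h2 : sz < D) (ha : 0 ≤ a) (hb : 0 ≤ b)
    (hab : a + b = 1) : a * sy + b * sz < D := by
  rcases eq_or_lt_of_le ha with rfl | ha'
  · have hb1 : b = 1 := by linarith
    rw [hb1]
    simpa using h2
  · have e : a * D + b * D = D := by linear_combination D * hab
    linarith [mul_lt_mul_of_pos_left h1 ha', mul_le_mul_of_nonneg_left h2.le hb]

theorem aux_concave {l r : ℕ} (J : Finset (Fin l)) (B : Fin l → Fin r → ℝ)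
    (hB : ∀ j k, 0 ≤ B j k) (c : ℝ) (hc : 1 / 2 ≤ c) :
    ConcaveOn ℝ
      { y : Fin r → ℝ | (∀ j ∈ J, ∑ k, B j k * Real.exp (y k) < 1) ∧
        c < ∏ j ∈ J, (1 - ∑ k, B j k * Real.exp (y k)) }
      (fun y => ∏ j ∈ J, (1 - ∑ k, B j k * Real.exp (y k))) := by
  classical
  have hc0 : (0:ℝ) < c := lt_of_lt_of_le (by norm_num) hc
  set S : Set (Fin r → ℝ) := { y : Fin r → ℝ | (∀ j ∈ J, ∑ k, B j k * Real.exp (y k) < 1) ∧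
        c < ∏ j ∈ J, (1 - ∑ k, B j k * Real.exp (y k)) } with hSdef
  have hptk : ∀ (a b : ℝ) (y z : Fin r → ℝ) (k : Fin r),
      (a • y + b • z) k = a * y k + b * z k := by
    intro a b y z k; simp [smul_eq_mul]
  have hconv : Convex ℝ S := by
    intro y hy z hz a b ha hb hab
    obtain ⟨hy1, hy2⟩ := hy
    obtain ⟨hz1, hz2⟩ := hz
    have hsum_eq : ∀ j, ∑ k, B j k * Real.exp ((a • y + b • z) k)
        = ∑ k, B j k * Real.exp (a * y k + b * z k) := by
      intro j
      exact Finset.sum_congr rfl fun k _ => by rw [hptk a b y z k]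
    constructor
    · intro j hj
      rw [hsum_eq j]
      calc ∑ k, B j k * Real.exp (a * y k + b * z k)
          ≤ a * (∑ k, B j k * Real.exp (y k)) + b * (∑ k, B j k * Real.exp (z k)) :=
            expsum_combo (B j) (hB j) y z ha hb hab
        _ < 1 := combo_lt (hy1 j hj) (hz1 j hj) ha hb hab
    · -- product part
      rcases eq_or_lt_of_le ha with rfl | ha0
      · have hb1 : b = 1 := by linarith
        have : (0:ℝ) • y + b • z = z := by rw [hb1]; simp
        rw [this]; exact hz2
      rcases eq_or_lt_of_le hb with rfl | hb0
      · have ha1 : a = 1 := by linarith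
        have : a • y + (0:ℝ) • z = y := by rw [ha1]; simp
        rw [this]; exact hy2
      have hwy : ∀ j ∈ J, 0 < 1 - ∑ k, B j k * Real.exp (y k) := by
        intro j hj; linarith [hy1 j hj]
      have hwz : ∀ j ∈ J, 0 < 1 - ∑ k, B j k * Real.exp (z k) := by
        intro j hj; linarith [hz1 j hj]
      have key : ∀ j ∈ J,
          (1 - ∑ k, B j k * Real.exp (y k)) ^ a * (1 - ∑ k, B j k * Real.exp (z k)) ^ b
            ≤ 1 - ∑ k, B j k * Real.exp ((a • y + b • z) k) := by
        intro j hj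
        have h1 := Real.geom_mean_le_arith_mean2_weighted ha hb
          (hwy j hj).le (hwz j hj).le hab
        have h2 : a * (1 - ∑ k, B j k * Real.exp (y k))
            + b * (1 - ∑ k, B j k * Real.exp (z k))
            ≤ 1 - ∑ k, B j k * Real.exp ((a • y + b • z) k) := by
          rw [hsum_eq j]
          have := expsum_combo (B j) (hB j) y z ha hb hab
          nlinarith [this]
        linarith
      have hprodge : ∏ j ∈ J, ((1 - ∑ k, B j k * Real.exp (y k)) ^ a
            * (1 - ∑ k, B j k * Real.exp (z k)) ^ b)
          ≤ ∏ j ∈ J, (1 - ∑ k, B j k * Real.exp ((a • y + b • z) k)) := by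
        refine Finset.prod_le_prod (fun j hj => ?_) (fun j hj => key j hj)
        exact mul_nonneg (Real.rpow_nonneg (hwy j hj).le a) (Real.rpow_nonneg (hwz j hj).le b)
      have hsplit : ∏ j ∈ J, ((1 - ∑ k, B j k * Real.exp (y k)) ^ a
            * (1 - ∑ k, B j k * Real.exp (z k)) ^ b)
          = (∏ j ∈ J, (1 - ∑ k, B j k * Real.exp (y k))) ^ a
            * (∏ j ∈ J, (1 - ∑ k, B j k * Real.exp (z k))) ^ b := by
        rw [Finset.prod_mul_distrib,
          ← Real.finset_prod_rpow J _ (fun j hj => (hwy j hj).le) a,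
          ← Real.finset_prod_rpow J _ (fun j hj => (hwz j hj).le) b]
      have hlt : c < (∏ j ∈ J, (1 - ∑ k, B j k * Real.exp (y k))) ^ a
            * (∏ j ∈ J, (1 - ∑ k, B j k * Real.exp (z k))) ^ b := by
        have e1 : c = c ^ a * c ^ b := by
          rw [← Real.rpow_add hc0, hab, Real.rpow_one]
        rw [e1]
        exact mul_lt_mul'' (Real.rpow_lt_rpow hc0.le hy2 ha0)
          (Real.rpow_lt_rpow hc0.le hz2 hb0)
          (Real.rpow_nonneg hc0.le a) (Real.rpow_nonneg hc0.le b)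
      calc c < _ := hlt
        _ = _ := hsplit.symm
        _ ≤ _ := hprodge
  refine ⟨hconv, ?_⟩
  intro y hy z hz a b ha hb hab
  -- segment function
  have hkey : ∀ (t : ℝ) (j : Fin l),
      ∑ k, B j k * Real.exp (y k) * Real.exp (t * (z k - y k))
        = ∑ k, B j k * Real.exp (((1 - t) • y + t • z) k) := by
    intro t j
    refine Finset.sum_congr rfl fun k _ => ?_
    rw [hptk (1 - t) t y z k, mul_assoc, ← Real.exp_add]
    congr 2
    ring
  have hseg := seg_concave J (fun j k => B j k * Real.exp (y k))
    (fun j k => mul_nonneg (hB j k) (Real.exp_pos _).le)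
    (fun k => z k - y k) (Set.Icc 0 1) (convex_Icc 0 1) ?_
  · have h01 : (0:ℝ) ∈ Set.Icc (0:ℝ) 1 := by constructor <;> norm_num
    have h11 : (1:ℝ) ∈ Set.Icc (0:ℝ) 1 := by constructor <;> norm_num
    have hcomb := hseg.2 h01 h11 ha hb hab
    have hb' : a • (0:ℝ) + b • (1:ℝ) = b := by simp [smul_eq_mul]
    rw [hb'] at hcomb
    have hφ0 : ∏ j ∈ J, (1 - ∑ k, B j k * Real.exp (y k) * Real.exp ((0:ℝ) * (z k - y k)))
        = ∏ j ∈ J, (1 - ∑ k, B j k * Real.exp (y k)) := by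
      refine Finset.prod_congr rfl fun j _ => ?_
      congr 1
      exact Finset.sum_congr rfl fun k _ => by rw [zero_mul, Real.exp_zero, mul_one]
    have hz1eq : ((1:ℝ) - 1) • y + (1:ℝ) • z = z := by simp
    have hφ1 : ∏ j ∈ J, (1 - ∑ k, B j k * Real.exp (y k) * Real.exp ((1:ℝ) * (z k - y k)))
        = ∏ j ∈ J, (1 - ∑ k, B j k * Real.exp (z k)) := by
      refine Finset.prod_congr rfl fun j _ => ?_
      rw [hkey 1 j, hz1eq]
    have haby : a • y + b • z = (1 - b) • y + b • z := by
      have : a = 1 - b := by linarith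
      rw [this]
    have hφb : ∏ j ∈ J, (1 - ∑ k, B j k * Real.exp (y k) * Real.exp (b * (z k - y k)))
        = ∏ j ∈ J, (1 - ∑ k, B j k * Real.exp ((a • y + b • z) k)) := by
      refine Finset.prod_congr rfl fun j _ => ?_
      rw [hkey b j, haby]
    simp only [hφ0, hφ1, hφb] at hcomb
    exact hcomb
  · intro t ht
    have h0t : (0:ℝ) ≤ 1 - t := by linarith [ht.2]
    have htt : (0:ℝ) ≤ t := ht.1
    have hptS : (1 - t) • y + t • z ∈ S := hconv hy hz h0t htt (by ring)
    obtain ⟨hpt1, hpt2⟩ := hptS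
    constructor
    · intro j hj
      rw [hkey t j]
      linarith [hpt1 j hj]
    · have : ∏ j ∈ J, (1 - ∑ k, B j k * Real.exp (y k) * Real.exp (t * (z k - y k)))
          = ∏ j ∈ J, (1 - ∑ k, B j k * Real.exp (((1 - t) • y + t • z) k)) := by
        refine Finset.prod_congr rfl fun j _ => ?_
        rw [hkey t j]
      rw [this]
      linarith

/-- Proposition 1 of the paper: if `c ≥ 1/2` (Cond. 1), then the
end-to-end Werner parameter `u_i` is concave on `S_i = {y ∈ T : u_i(y) > c}`. -/
theorem e2e_werner_param_concave_of_half_le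
    (l r : ℕ) (hl : 0 < l) (hr : 0 < r)
    (A : Fin l → Fin r → ℝ) (hA : ∀ j i, A j i = 0 ∨ A j i = 1)
    (d : Fin l → ℝ) (hd : ∀ j, 0 < d j)
    (i : Fin r) (hi : ∃ j, A j i = 1)
    (c : ℝ) (hc : 1 / 2 ≤ c) :
    ConcaveOn ℝ
      { y : Fin r → ℝ |
        (∀ j, ∑ k, A j k * Real.exp (y k) < d j) ∧
        c < ∏ j ∈ Finset.univ.filter (fun j => A j i = 1),
            (1 - (∑ k, A j k * Real.exp (y k)) / d j) }
      (fun y => ∏ j ∈ Finset.univ.filter (fun j => A j i = 1),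
          (1 - (∑ k, A j k * Real.exp (y k)) / d j)) := by
  classical
  set J : Finset (Fin l) := Finset.univ.filter (fun j => A j i = 1) with hJdef
  set B : Fin l → Fin r → ℝ := fun j k => A j k / d j with hBdef
  have hA0 : ∀ j k, 0 ≤ A j k := by
    intro j k; rcases hA j k with h | h <;> rw [h] <;> norm_num
  have hB0 : ∀ j k, 0 ≤ B j k := fun j k => div_nonneg (hA0 j k) (hd j).le
  -- pointwise identification of the factors
  have hpoint : ∀ (y : Fin r → ℝ) (j : Fin l),
      1 - (∑ k, A j k * Real.exp (y k)) / d j = 1 - ∑ k, B j k * Real.exp (y k) := by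
    intro y j
    rw [Finset.sum_div]
    congr 1
    exact Finset.sum_congr rfl fun k _ => by rw [hBdef]; ring
  have hprodeq : ∀ y : Fin r → ℝ,
      ∏ j ∈ J, (1 - (∑ k, A j k * Real.exp (y k)) / d j)
        = ∏ j ∈ J, (1 - ∑ k, B j k * Real.exp (y k)) :=
    fun y => Finset.prod_congr rfl fun j _ => hpoint y j
  -- convexity of T
  have hTconv : Convex ℝ {y : Fin r → ℝ | ∀ j, ∑ k, A j k * Real.exp (y k) < d j} := by
    intro y hy z hz a b ha hb hab
    intro j
    have hsum_eq : ∑ k, A j k * Real.exp ((a • y + b • z) k)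
        = ∑ k, A j k * Real.exp (a * y k + b * z k) :=
      Finset.sum_congr rfl fun k _ => by simp [smul_eq_mul]
    calc ∑ k, A j k * Real.exp ((a • y + b • z) k)
        = ∑ k, A j k * Real.exp (a * y k + b * z k) := hsum_eq
      _ ≤ a * (∑ k, A j k * Real.exp (y k)) + b * (∑ k, A j k * Real.exp (z k)) :=
          expsum_combo (A j) (hA0 j) y z ha hb hab
      _ < d j := combo_lt (hy j) (hz j) ha hb hab
  -- the auxiliary concavity result
  have haux := aux_concave J B hB0 c hc
  -- set identification
  have hOeq : { y : Fin r → ℝ |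
        (∀ j, ∑ k, A j k * Real.exp (y k) < d j) ∧
        c < ∏ j ∈ J, (1 - (∑ k, A j k * Real.exp (y k)) / d j) }
      = {y : Fin r → ℝ | ∀ j, ∑ k, A j k * Real.exp (y k) < d j}
        ∩ { y : Fin r → ℝ | (∀ j ∈ J, ∑ k, B j k * Real.exp (y k) < 1) ∧
            c < ∏ j ∈ J, (1 - ∑ k, B j k * Real.exp (y k)) } := by
    ext y
    simp only [Set.mem_setOf_eq, Set.mem_inter_iff]
    constructor
    · rintro ⟨hT, hu⟩
      refine ⟨hT, fun j _ => ?_, by rwa [← hprodeq y]⟩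
      have h1 : ∑ k, B j k * Real.exp (y k) = (∑ k, A j k * Real.exp (y k)) / d j := by
        rw [Finset.sum_div]
        exact Finset.sum_congr rfl fun k _ => by rw [hBdef]; ring
      rw [h1, div_lt_one (hd j)]
      exact hT j
    · rintro ⟨hT, _, hu⟩
      exact ⟨hT, by rwa [hprodeq y]⟩
  have hfun : (fun y : Fin r → ℝ => ∏ j ∈ J, (1 - (∑ k, A j k * Real.exp (y k)) / d j))
      = fun y => ∏ j ∈ J, (1 - ∑ k, B j k * Real.exp (y k)) := funext hprodeq
  rw [hfun, hOeq]
  exact haux.subset Set.inter_subset_right (hTconv.inter haux.1)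
end

section
/- Let l, r be positive integers, let A be an l×r matrix with entries a_{ji} ∈ {0,1}, let d_1,…,d_l > 0, and fix i ∈ [r] with at least one j such that a_{ji} = 1. For y ∈ ℝ^r write ⟨A_j, e^y⟩ := ∑_{k=1}^r a_{jk} e^{y_k}, w_j(y) := 1 − ⟨A_j, e^y⟩/d_j, u_i(y) := ∏_{j : a_{ji}=1} w_j(y), T := { y ∈ ℝ^r : ⟨A_j, e^y⟩ < d_j for all j }, and S_i := { y ∈ T : u_i(y) > c }. Suppose: (i) c ≥ 1/2 (Cond. 1); (ii) F : (c,1) → ℝ is twice differentiable and nondecreasing with F'(u) ≥ 0 on (c,1); (iii) there exists c₁ ∈ [c,1) such that F''(u) ≤ 0 for all u ∈ (c,c₁] and F''(u) > 0 for all u ∈ (c₁,1); and (iv) for all u ∈ (c₁,1), u·F''(u) + F'(u) > 0 and u·F''(u)/(u·F''(u) + F'(u)) + 1/u ≤ 2 (Cond. 2). Then the function y ↦ F(u_i(y)) is concave on S_i. -/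
lemma sum_one_sub_le {ι : Type*} (s : Finset ι) (w : ι → ℝ) (h0 : ∀ j ∈ s, 0 < w j) :
    ∑ j ∈ s, (1 - w j) ≤ -Real.log (∏ j ∈ s, w j) := by
  rw [Real.log_prod (fun j hj => (h0 j hj).ne'), ← Finset.sum_neg_distrib]
  exact Finset.sum_le_sum fun j hj => by
    have := Real.log_le_sub_one_of_pos (h0 j hj)
    linarith

lemma neg_log_le {u : ℝ} (hu : 0 < u) : -Real.log u ≤ (1 - u) / u := by
  have h := Real.log_le_sub_one_of_pos (inv_pos.2 hu)
  rw [Real.log_inv] at h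
  have : u⁻¹ - 1 = (1 - u) / u := by field_simp
  linarith [this ▸ h]

lemma key_scalar (c c₁ : ℝ) (F' F'' : ℝ → ℝ) (hc : 1/2 ≤ c) (hc₁ : c₁ ∈ Set.Ico c 1)
    (hF'nonneg : ∀ u ∈ Set.Ioo c 1, 0 ≤ F' u)
    (hconcave : ∀ u ∈ Set.Ioc c c₁, F'' u ≤ 0)
    (hcond2 : ∀ u ∈ Set.Ioo c₁ 1,
      0 < u * F'' u + F' u ∧ u * F'' u / (u * F'' u + F' u) + 1 / u ≤ 2) :
    ∀ u ∈ Set.Ioo c 1, 0 < u * F'' u + F' u →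
      (u * F'' u + F' u) * (1 - u) ≤ u * F' u := by
  intro u hu hK
  have hu0 : 0 < u := lt_trans (by linarith) hu.1
  have hu2 : 1/2 ≤ u := le_trans hc hu.1.le
  have h3 := hF'nonneg u hu
  rcases le_or_gt u c₁ with h | h
  · have h2 := hconcave u ⟨hu.1, h⟩
    nlinarith [mul_nonpos_of_nonneg_of_nonpos hu0.le h2, mul_nonneg hK.le hu0.le,
      mul_nonneg h3 (by linarith [hu.2] : (0:ℝ) ≤ 1 - u)]
  · obtain ⟨hKpos, hle⟩ := hcond2 u ⟨h, hu.2⟩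
    have h4 : u * F'' u ≤ (2 - 1/u) * (u * F'' u + F' u) := by
      have h5 : u * F'' u / (u * F'' u + F' u) ≤ 2 - 1/u := by linarith
      rw [div_le_iff₀ hKpos] at h5
      linarith
    have h4' : u * F'' u * u ≤ 2*u*(u*F'' u + F' u) - (u*F'' u + F' u) := by
      have h6 := mul_le_mul_of_nonneg_right h4 hu0.le
      have e : (2 - 1/u) * (u * F'' u + F' u) * u
          = 2*u*(u*F'' u + F' u) - (u*F'' u + F' u) := by
        field_simp
      linarith [e ▸ h6]
    nlinarith [mul_nonneg h3 (by linarith [hu.2] : (0:ℝ) ≤ 1 - u)]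

lemma core_ineq {ι : Type*} (V : Finset ι) (W W' W'' : ι → ℝ)
    (hW0 : ∀ j ∈ V, 0 < W j) (hW1 : ∀ j ∈ V, W j < 1)
    (hCS : ∀ j ∈ V, (W' j)^2 ≤ (1 - W j) * (-(W'' j)))
    (u K Fd : ℝ) (hu : u = ∏ j ∈ V, W j) (hu0 : 0 < u)
    (hFd : 0 ≤ Fd) (hkey : 0 < K → K * (1 - u) ≤ u * Fd) :
    K * (∑ j ∈ V, W' j / W j)^2
      + Fd * (∑ j ∈ V, (W'' j * W j - W' j * W' j) / (W j)^2) ≤ 0 := by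
  classical
  set Q : ℝ := ∑ j ∈ V, (W' j / W j)^2 / (1 - W j) with hQdef
  have hQ0 : 0 ≤ Q := Finset.sum_nonneg fun j hj =>
    div_nonneg (sq_nonneg _) (by linarith [hW1 j hj])
  -- per-term bound on the second log-derivative
  have hterm : ∀ j ∈ V, (W'' j * W j - W' j * W' j) / (W j)^2
      ≤ -((W' j / W j)^2 / (1 - W j)) := by
    intro j hj
    have hw0 := hW0 j hj
    have hw1 : (0:ℝ) < 1 - W j := by linarith [hW1 j hj]
    have h2 : (W'' j * W j - W' j * W' j) * (1 - W j) ≤ -(W' j^2) := by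
      nlinarith [mul_nonneg hw0.le (sub_nonneg.2 (hCS j hj)), sq_nonneg (W' j),
        mul_nonneg hw1.le (sq_nonneg (W' j))]
    have h3 : W'' j * W j - W' j * W' j ≤ -(W' j^2) / (1 - W j) := by
      rw [le_div_iff₀ hw1]
      linarith
    have h4 : -((W' j / W j)^2 / (1 - W j)) = (-(W' j^2) / (1 - W j)) / (W j)^2 := by
      field_simp
    rw [h4]
    exact div_le_div_of_nonneg_right h3 (by positivity)
  have hL2 : (∑ j ∈ V, (W'' j * W j - W' j * W' j) / (W j)^2) ≤ -Q := by
    rw [hQdef, ← Finset.sum_neg_distrib]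
    exact Finset.sum_le_sum hterm
  rcases le_or_gt K 0 with hKle | hKpos
  · have h5 : K * (∑ j ∈ V, W' j / W j)^2 ≤ 0 :=
      mul_nonpos_of_nonpos_of_nonneg hKle (sq_nonneg _)
    nlinarith [mul_le_mul_of_nonneg_left hL2 hFd, mul_nonneg hFd hQ0]
  · -- Cauchy–Schwarz : (∑ q)² ≤ (∑ (1 - W j)) * Q
    have hCS2 : (∑ j ∈ V, W' j / W j)^2 ≤ (∑ j ∈ V, (1 - W j)) * Q := by
      have h := Finset.sum_mul_sq_le_sq_mul_sq V (fun j => Real.sqrt (1 - W j))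
        (fun j => (W' j / W j) / Real.sqrt (1 - W j))
      have e1 : ∑ j ∈ V, Real.sqrt (1 - W j) * ((W' j / W j) / Real.sqrt (1 - W j))
          = ∑ j ∈ V, W' j / W j := Finset.sum_congr rfl fun j hj => by
        have hw1 : (0:ℝ) < 1 - W j := by linarith [hW1 j hj]
        rw [mul_comm, div_mul_cancel₀]
        exact (Real.sqrt_ne_zero'.2 hw1)
      have e2 : ∑ j ∈ V, (Real.sqrt (1 - W j))^2 = ∑ j ∈ V, (1 - W j) :=
        Finset.sum_congr rfl fun j hj =>
          Real.sq_sqrt (by linarith [hW1 j hj])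
      have e3 : ∑ j ∈ V, ((W' j / W j) / Real.sqrt (1 - W j))^2
          = ∑ j ∈ V, (W' j / W j)^2 / (1 - W j) :=
        Finset.sum_congr rfl fun j hj => by
          rw [div_pow, Real.sq_sqrt (by linarith [hW1 j hj] : (0:ℝ) ≤ 1 - W j)]
      rw [e1, e2, e3] at h
      exact h
    have hsw : (∑ j ∈ V, (1 - W j)) ≤ (1 - u) / u := by
      calc ∑ j ∈ V, (1 - W j) ≤ -Real.log (∏ j ∈ V, W j) := sum_one_sub_le V W hW0
        _ = -Real.log u := by rw [hu]
        _ ≤ (1 - u) / u := neg_log_le hu0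
    have hKQ : K * ((1 - u) / u) ≤ Fd := by
      rw [← mul_div_assoc, div_le_iff₀ hu0]
      linarith [hkey hKpos]
    have h6 : K * (∑ j ∈ V, W' j / W j)^2 ≤ Fd * Q := by
      calc K * (∑ j ∈ V, W' j / W j)^2 ≤ K * ((∑ j ∈ V, (1 - W j)) * Q) :=
            mul_le_mul_of_nonneg_left hCS2 hKpos.le
        _ ≤ K * (((1 - u) / u) * Q) := by
            apply mul_le_mul_of_nonneg_left _ hKpos.le
            exact mul_le_mul_of_nonneg_right hsw hQ0
        _ = (K * ((1 - u) / u)) * Q := by ring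
        _ ≤ Fd * Q := mul_le_mul_of_nonneg_right hKQ hQ0
    nlinarith [mul_le_mul_of_nonneg_left hL2 hFd]

lemma segment_concave
    (l r : ℕ) (A : Fin l → Fin r → ℝ) (hA0 : ∀ j k, 0 ≤ A j k)
    (d : Fin l → ℝ) (hd : ∀ j, 0 < d j) (i : Fin r) (hi : ∃ j, A j i = 1)
    (c : ℝ) (hc : 1/2 ≤ c) (F F' F'' : ℝ → ℝ)
    (hF' : ∀ u ∈ Set.Ioo c 1, HasDerivAt F (F' u) u)
    (hF'' : ∀ u ∈ Set.Ioo c 1, HasDerivAt F' (F'' u) u)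
    (hF'nonneg : ∀ u ∈ Set.Ioo c 1, 0 ≤ F' u)
    (hkey : ∀ u ∈ Set.Ioo c 1, 0 < u * F'' u + F' u →
      (u * F'' u + F' u) * (1 - u) ≤ u * F' u)
    (x v : Fin r → ℝ)
    (hIconv : Convex ℝ {t : ℝ | (∀ j, ∑ k, A j k * Real.exp (x k + t * v k) < d j) ∧
      c < ∏ j ∈ Finset.univ.filter (fun j => A j i = 1),
        (1 - (∑ k, A j k * Real.exp (x k + t * v k)) / d j)}) :
    ConcaveOn ℝ {t : ℝ | (∀ j, ∑ k, A j k * Real.exp (x k + t * v k) < d j) ∧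
      c < ∏ j ∈ Finset.univ.filter (fun j => A j i = 1),
        (1 - (∑ k, A j k * Real.exp (x k + t * v k)) / d j)}
      (fun t => F (∏ j ∈ Finset.univ.filter (fun j => A j i = 1),
        (1 - (∑ k, A j k * Real.exp (x k + t * v k)) / d j))) := by
  classical
  set V : Finset (Fin l) := Finset.univ.filter (fun j => A j i = 1) with hVdef
  set I : Set ℝ := {t : ℝ | (∀ j, ∑ k, A j k * Real.exp (x k + t * v k) < d j) ∧
      c < ∏ j ∈ V, (1 - (∑ k, A j k * Real.exp (x k + t * v k)) / d j)} with hIdef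
  set W : Fin l → ℝ → ℝ :=
    fun j t => 1 - (∑ k, A j k * Real.exp (x k + t * v k)) / d j with hWdef
  set W' : Fin l → ℝ → ℝ :=
    fun j t => -((∑ k, A j k * (v k * Real.exp (x k + t * v k))) / d j) with hW'def
  set W'' : Fin l → ℝ → ℝ :=
    fun j t => -((∑ k, A j k * (v k ^ 2 * Real.exp (x k + t * v k))) / d j) with hW''def
  set L : ℝ → ℝ := fun t => ∑ j ∈ V, Real.log (W j t) with hLdef
  set L' : ℝ → ℝ := fun t => ∑ j ∈ V, W' j t / W j t with hL'def
  set L'' : ℝ → ℝ :=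
    fun t => ∑ j ∈ V, (W'' j t * W j t - W' j t * W' j t) / (W j t)^2 with hL''def
  -- openness of I
  have hO : IsOpen I := by
    have hIeq : I = (⋂ j, {t : ℝ | ∑ k, A j k * Real.exp (x k + t * v k) < d j}) ∩
        {t : ℝ | c < ∏ j ∈ V, (1 - (∑ k, A j k * Real.exp (x k + t * v k)) / d j)} := by
      ext t
      simp [hIdef, Set.mem_setOf_eq, Set.mem_iInter]
    rw [hIeq]
    refine IsOpen.inter (isOpen_iInter_of_finite fun j => isOpen_lt (by fun_prop) continuous_const) (isOpen_lt continuous_const (by fun_prop))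
  have hmem : ∀ t, t ∈ I → (∀ j, ∑ k, A j k * Real.exp (x k + t * v k) < d j) ∧
      c < ∏ j ∈ V, W j t := fun t ht => ht
  have hW0 : ∀ t ∈ I, ∀ j, 0 < W j t := by
    intro t ht j
    have h1 := (hmem t ht).1 j
    have h2 : (∑ k, A j k * Real.exp (x k + t * v k)) / d j < 1 :=
      (div_lt_one (hd j)).2 h1
    simp only [hWdef]
    linarith
  have hSpos : ∀ (t : ℝ), ∀ j ∈ V, 0 < ∑ k, A j k * Real.exp (x k + t * v k) := by
    intro t j hj
    have hji : A j i = 1 := (Finset.mem_filter.mp hj).2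
    calc (0:ℝ) < A j i * Real.exp (x i + t * v i) := by rw [hji]; positivity
      _ ≤ ∑ k, A j k * Real.exp (x k + t * v k) :=
        Finset.single_le_sum (f := fun k => A j k * Real.exp (x k + t * v k))
          (fun k _ => mul_nonneg (hA0 j k) (Real.exp_pos _).le) (Finset.mem_univ i)
  have hWV1 : ∀ (t : ℝ), ∀ j ∈ V, W j t < 1 := by
    intro t j hj
    have := div_pos (hSpos t j hj) (hd j)
    simp only [hWdef]
    linarith
  have hUlt1 : ∀ t ∈ I, ∏ j ∈ V, W j t < 1 := by
    intro t ht
    obtain ⟨j0, hj0⟩ := hi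
    have hj0V : j0 ∈ V := Finset.mem_filter.mpr ⟨Finset.mem_univ _, hj0⟩
    calc ∏ j ∈ V, W j t = W j0 t * ∏ j ∈ V.erase j0, W j t :=
          (Finset.mul_prod_erase V _ hj0V).symm
      _ ≤ W j0 t * 1 := by
          refine mul_le_mul_of_nonneg_left ?_ (hW0 t ht j0).le
          exact Finset.prod_le_one (fun j hj => (hW0 t ht j).le)
            (fun j hj => (hWV1 t j (Finset.mem_of_mem_erase hj)).le)
      _ < 1 := by rw [mul_one]; exact hWV1 t j0 hj0V
  have hUeq : ∀ t ∈ I, Real.exp (L t) = ∏ j ∈ V, W j t := by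
    intro t ht
    rw [hLdef]
    simp only
    rw [Real.exp_sum]
    exact Finset.prod_congr rfl fun j hj => Real.exp_log (hW0 t ht j)
  have hUmem : ∀ t ∈ I, Real.exp (L t) ∈ Set.Ioo c 1 := by
    intro t ht
    rw [hUeq t ht]
    exact ⟨(hmem t ht).2, hUlt1 t ht⟩
  -- derivative computations
  have hE : ∀ (k : Fin r) (t : ℝ),
      HasDerivAt (fun s => Real.exp (x k + s * v k)) (v k * Real.exp (x k + t * v k)) t := by
    intro k t
    have h := (((hasDerivAt_id t).mul_const (v k)).const_add (x k)).exp
    simpa [mul_comm] using h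
  have hE2 : ∀ (k : Fin r) (t : ℝ),
      HasDerivAt (fun s => v k * Real.exp (x k + s * v k))
        (v k ^ 2 * Real.exp (x k + t * v k)) t := by
    intro k t
    have h := (hE k t).const_mul (v k)
    rw [show v k ^ 2 * Real.exp (x k + t * v k) = v k * (v k * Real.exp (x k + t * v k)) by ring]
    exact h
  have hWd : ∀ (j : Fin l) (t : ℝ), HasDerivAt (W j) (W' j t) t := fun j t =>
    ((HasDerivAt.fun_sum fun k _ => (hE k t).const_mul (A j k)).div_const (d j)).const_sub 1
  have hW'd : ∀ (j : Fin l) (t : ℝ), HasDerivAt (W' j) (W'' j t) t := fun j t =>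
    ((HasDerivAt.fun_sum fun k _ => (hE2 k t).const_mul (A j k)).div_const (d j)).neg
  have hLd : ∀ t ∈ I, HasDerivAt L (L' t) t := fun t ht =>
    HasDerivAt.fun_sum fun j _ => (hWd j t).log (hW0 t ht j).ne'
  have hL'd : ∀ t ∈ I, HasDerivAt L' (L'' t) t := fun t ht =>
    HasDerivAt.fun_sum fun j _ => (hW'd j t).div (hWd j t) (hW0 t ht j).ne'
  have hUd : ∀ t ∈ I, HasDerivAt (fun s => Real.exp (L s)) (Real.exp (L t) * L' t) t :=
    fun t ht => (hLd t ht).exp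
  have hGd : ∀ t ∈ I, HasDerivAt (fun s => F (Real.exp (L s)))
      (F' (Real.exp (L t)) * (Real.exp (L t) * L' t)) t :=
    fun t ht => (hF' _ (hUmem t ht)).comp t (hUd t ht)
  have hG'd : ∀ t ∈ I, HasDerivAt (fun s => F' (Real.exp (L s)) * (Real.exp (L s) * L' s))
      (F'' (Real.exp (L t)) * (Real.exp (L t) * L' t) * (Real.exp (L t) * L' t)
        + F' (Real.exp (L t)) * ((Real.exp (L t) * L' t) * L' t + Real.exp (L t) * L'' t)) t :=
    fun t ht => ((hF'' _ (hUmem t ht)).comp t (hUd t ht)).mul ((hUd t ht).mul (hL'd t ht))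
  have hGprod : ∀ t ∈ I, HasDerivAt (fun s => F (∏ j ∈ V, W j s))
      (F' (Real.exp (L t)) * (Real.exp (L t) * L' t)) t := by
    intro t ht
    apply (hGd t ht).congr_of_eventuallyEq
    filter_upwards [hO.mem_nhds ht] with s hs
    rw [hUeq s hs]
  -- per-link Cauchy–Schwarz
  have hCSj : ∀ (j : Fin l) (t : ℝ), (W' j t)^2 ≤ (1 - W j t) * (-(W'' j t)) := by
    intro j t
    have hnn : ∀ k, (0:ℝ) ≤ A j k * Real.exp (x k + t * v k) := fun k =>
      mul_nonneg (hA0 j k) (Real.exp_pos _).le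
    have h := Finset.sum_mul_sq_le_sq_mul_sq Finset.univ
      (fun k => Real.sqrt (A j k * Real.exp (x k + t * v k)))
      (fun k => v k * Real.sqrt (A j k * Real.exp (x k + t * v k)))
    have e1 : ∑ k, Real.sqrt (A j k * Real.exp (x k + t * v k)) *
        (v k * Real.sqrt (A j k * Real.exp (x k + t * v k)))
        = ∑ k, A j k * (v k * Real.exp (x k + t * v k)) :=
      Finset.sum_congr rfl fun k _ => by
        rw [show Real.sqrt (A j k * Real.exp (x k + t * v k)) *
            (v k * Real.sqrt (A j k * Real.exp (x k + t * v k)))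
            = v k * (Real.sqrt (A j k * Real.exp (x k + t * v k)) *
              Real.sqrt (A j k * Real.exp (x k + t * v k))) from by ring,
          Real.mul_self_sqrt (hnn k)]
        ring
    have e2 : ∑ k, (Real.sqrt (A j k * Real.exp (x k + t * v k)))^2
        = ∑ k, A j k * Real.exp (x k + t * v k) :=
      Finset.sum_congr rfl fun k _ => Real.sq_sqrt (hnn k)
    have e3 : ∑ k, (v k * Real.sqrt (A j k * Real.exp (x k + t * v k)))^2
        = ∑ k, A j k * (v k ^ 2 * Real.exp (x k + t * v k)) :=
      Finset.sum_congr rfl fun k _ => by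
        rw [mul_pow, Real.sq_sqrt (hnn k)]
        ring
    rw [e1, e2, e3] at h
    simp only [hWdef, hW'def, hW''def]
    calc (-((∑ k, A j k * (v k * Real.exp (x k + t * v k))) / d j))^2
        = (∑ k, A j k * (v k * Real.exp (x k + t * v k)))^2 / (d j)^2 := by ring
      _ ≤ ((∑ k, A j k * Real.exp (x k + t * v k)) *
            (∑ k, A j k * (v k ^ 2 * Real.exp (x k + t * v k)))) / (d j)^2 :=
          div_le_div_of_nonneg_right h (by positivity)
      _ = (1 - (1 - (∑ k, A j k * Real.exp (x k + t * v k)) / d j)) *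
            (-(-((∑ k, A j k * (v k ^ 2 * Real.exp (x k + t * v k))) / d j))) := by
          ring
  -- sign of the second derivative
  have hGsign : ∀ t ∈ I,
      F'' (Real.exp (L t)) * (Real.exp (L t) * L' t) * (Real.exp (L t) * L' t)
        + F' (Real.exp (L t)) * ((Real.exp (L t) * L' t) * L' t + Real.exp (L t) * L'' t)
        ≤ 0 := by
    intro t ht
    have hu0 : (0:ℝ) < Real.exp (L t) := Real.exp_pos _
    have hcore := core_ineq V (fun j => W j t) (fun j => W' j t) (fun j => W'' j t)
      (fun j _ => hW0 t ht j) (fun j hj => hWV1 t j hj) (fun j hj => hCSj j t)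
      (Real.exp (L t))
      (Real.exp (L t) * F'' (Real.exp (L t)) + F' (Real.exp (L t)))
      (F' (Real.exp (L t)))
      (hUeq t ht) hu0 (hF'nonneg _ (hUmem t ht)) (hkey _ (hUmem t ht))
    have hrw : F'' (Real.exp (L t)) * (Real.exp (L t) * L' t) * (Real.exp (L t) * L' t)
        + F' (Real.exp (L t)) * ((Real.exp (L t) * L' t) * L' t + Real.exp (L t) * L'' t)
        = Real.exp (L t) *
          ((Real.exp (L t) * F'' (Real.exp (L t)) + F' (Real.exp (L t))) * (L' t)^2
            + F' (Real.exp (L t)) * L'' t) := by ring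
    rw [hrw]
    refine mul_nonpos_of_nonneg_of_nonpos hu0.le ?_
    exact hcore
  -- assemble via the 1-D second-derivative criterion
  refine concaveOn_of_hasDerivWithinAt2_nonpos hIconv
    (f' := fun t => F' (Real.exp (L t)) * (Real.exp (L t) * L' t))
    (f'' := fun t => F'' (Real.exp (L t)) * (Real.exp (L t) * L' t) * (Real.exp (L t) * L' t)
        + F' (Real.exp (L t)) * ((Real.exp (L t) * L' t) * L' t + Real.exp (L t) * L'' t))
    ?_ ?_ ?_ ?_
  · exact fun t ht => (hGprod t ht).continuousAt.continuousWithinAt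
  · intro t ht
    rw [hO.interior_eq] at ht ⊢
    exact (hGprod t ht).hasDerivWithinAt
  · intro t ht
    rw [hO.interior_eq] at ht ⊢
    exact (hG'd t ht).hasDerivWithinAt
  · intro t ht
    rw [hO.interior_eq] at ht
    exact hGsign t ht


/-- Theorem 2 of the paper, the main result: under Cond. 1 (`c ≥ 1/2`)
and Cond. 2, together with the assumptions on the inflection point `c₁` of `F = ln f_i`,
the function `y ↦ F(u_i(y))` is concave on `S_i = {y ∈ T : u_i(y) > c}`. -/
theorem F_comp_e2e_werner_param_concave
    (l r : ℕ) (hl : 0 < l) (hr : 0 < r)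
    (A : Fin l → Fin r → ℝ) (hA : ∀ j i, A j i = 0 ∨ A j i = 1)
    (d : Fin l → ℝ) (hd : ∀ j, 0 < d j)
    (i : Fin r) (hi : ∃ j, A j i = 1)
    (c : ℝ) (hc : 1 / 2 ≤ c)
    (F F' F'' : ℝ → ℝ)
    (hFmono : MonotoneOn F (Set.Ioo c 1))
    (hF' : ∀ u ∈ Set.Ioo c 1, HasDerivAt F (F' u) u)
    (hF'' : ∀ u ∈ Set.Ioo c 1, HasDerivAt F' (F'' u) u)
    (hF'nonneg : ∀ u ∈ Set.Ioo c 1, 0 ≤ F' u)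
    (c₁ : ℝ) (hc₁ : c₁ ∈ Set.Ico c 1)
    (hconcave : ∀ u ∈ Set.Ioc c c₁, F'' u ≤ 0)
    (hconvex : ∀ u ∈ Set.Ioo c₁ 1, 0 < F'' u)
    (hcond2 : ∀ u ∈ Set.Ioo c₁ 1,
      0 < u * F'' u + F' u ∧ u * F'' u / (u * F'' u + F' u) + 1 / u ≤ 2) :
    ConcaveOn ℝ
      { y : Fin r → ℝ |
        (∀ j, ∑ k, A j k * Real.exp (y k) < d j) ∧
        c < ∏ j ∈ Finset.univ.filter (fun j => A j i = 1),
            (1 - (∑ k, A j k * Real.exp (y k)) / d j) }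
      (fun y => F (∏ j ∈ Finset.univ.filter (fun j => A j i = 1),
          (1 - (∑ k, A j k * Real.exp (y k)) / d j))) := by
  classical
  have hA0 : ∀ j k, 0 ≤ A j k := fun j k => by
    rcases hA j k with h | h <;> rw [h] <;> norm_num
  have hc0 : (0:ℝ) < c := lt_of_lt_of_le (by norm_num) hc
  have hkey := key_scalar c c₁ F' F'' hc hc₁ hF'nonneg hconcave hcond2
  set V : Finset (Fin l) := Finset.univ.filter (fun j => A j i = 1) with hVdef
  -- convexity of the feasible set S
  have hSconv : Convex ℝ { y : Fin r → ℝ |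
      (∀ j, ∑ k, A j k * Real.exp (y k) < d j) ∧
      c < ∏ j ∈ V, (1 - (∑ k, A j k * Real.exp (y k)) / d j) } := by
    intro p hp q hq a b ha hb hab
    rcases eq_or_lt_of_le ha with ha0 | ha0
    · have hb1 : b = 1 := by linarith
      rw [← ha0, hb1]
      simpa using hq
    rcases eq_or_lt_of_le hb with hb0 | hb0
    · have ha1 : a = 1 := by linarith
      rw [← hb0, ha1]
      simpa using hp
    have hsum : ∀ j, ∑ k, A j k * Real.exp ((a • p + b • q) k)
        ≤ a * (∑ k, A j k * Real.exp (p k)) + b * (∑ k, A j k * Real.exp (q k)) := by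
      intro j
      rw [Finset.mul_sum, Finset.mul_sum, ← Finset.sum_add_distrib]
      refine Finset.sum_le_sum fun k _ => ?_
      have hexp : Real.exp (a * p k + b * q k)
          ≤ a * Real.exp (p k) + b * Real.exp (q k) := by
        have h := convexOn_exp.2 (Set.mem_univ (p k)) (Set.mem_univ (q k)) ha hb hab
        simpa [smul_eq_mul] using h
      have hcoord : (a • p + b • q) k = a * p k + b * q k := by
        simp [Pi.add_apply, Pi.smul_apply, smul_eq_mul]
      rw [hcoord]
      calc A j k * Real.exp (a * p k + b * q k)
          ≤ A j k * (a * Real.exp (p k) + b * Real.exp (q k)) :=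
            mul_le_mul_of_nonneg_left hexp (hA0 j k)
        _ = a * (A j k * Real.exp (p k)) + b * (A j k * Real.exp (q k)) := by ring
    refine ⟨fun j => ?_, ?_⟩
    · calc ∑ k, A j k * Real.exp ((a • p + b • q) k)
          ≤ a * (∑ k, A j k * Real.exp (p k)) + b * (∑ k, A j k * Real.exp (q k)) := hsum j
        _ < a * d j + b * d j :=
            add_lt_add (mul_lt_mul_of_pos_left (hp.1 j) ha0)
              (mul_lt_mul_of_pos_left (hq.1 j) hb0)
        _ = d j := by rw [← add_mul, hab, one_mul]
    · have hWp : ∀ j, 0 < 1 - (∑ k, A j k * Real.exp (p k)) / d j := fun j => by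
        have := (div_lt_one (hd j)).2 (hp.1 j); linarith
      have hWq : ∀ j, 0 < 1 - (∑ k, A j k * Real.exp (q k)) / d j := fun j => by
        have := (div_lt_one (hd j)).2 (hq.1 j); linarith
      have hstep : ∀ j ∈ V,
          (1 - (∑ k, A j k * Real.exp (p k)) / d j) ^ a *
            (1 - (∑ k, A j k * Real.exp (q k)) / d j) ^ b
          ≤ 1 - (∑ k, A j k * Real.exp ((a • p + b • q) k)) / d j := by
        intro j _
        have hd' := hd j
        have h2 : (∑ k, A j k * Real.exp ((a • p + b • q) k)) / d j
            ≤ (a * (∑ k, A j k * Real.exp (p k)) + b * (∑ k, A j k * Real.exp (q k))) / d j :=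
          div_le_div_of_nonneg_right (hsum j) hd'.le
        have h3 : (a * (∑ k, A j k * Real.exp (p k)) + b * (∑ k, A j k * Real.exp (q k))) / d j
            = a * ((∑ k, A j k * Real.exp (p k)) / d j)
              + b * ((∑ k, A j k * Real.exp (q k)) / d j) := by ring
        have h1 : a * (1 - (∑ k, A j k * Real.exp (p k)) / d j)
              + b * (1 - (∑ k, A j k * Real.exp (q k)) / d j)
            ≤ 1 - (∑ k, A j k * Real.exp ((a • p + b • q) k)) / d j := by
          have h4 : a * (1 - (∑ k, A j k * Real.exp (p k)) / d j)
              + b * (1 - (∑ k, A j k * Real.exp (q k)) / d j)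
              = 1 - (a * ((∑ k, A j k * Real.exp (p k)) / d j)
                + b * ((∑ k, A j k * Real.exp (q k)) / d j)) := by
            linear_combination hab
          rw [h4]
          rw [h3] at h2
          linarith
        exact (Real.geom_mean_le_arith_mean2_weighted ha hb (hWp j).le (hWq j).le hab).trans h1
      have hppos : (0:ℝ) < ∏ j ∈ V, (1 - (∑ k, A j k * Real.exp (p k)) / d j) :=
        Finset.prod_pos fun j _ => hWp j
      have hqpos : (0:ℝ) < ∏ j ∈ V, (1 - (∑ k, A j k * Real.exp (q k)) / d j) :=
        Finset.prod_pos fun j _ => hWq j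
      calc c = c ^ a * c ^ b := by
            rw [← Real.rpow_add hc0, hab, Real.rpow_one]
        _ < (∏ j ∈ V, (1 - (∑ k, A j k * Real.exp (p k)) / d j)) ^ a *
              (∏ j ∈ V, (1 - (∑ k, A j k * Real.exp (q k)) / d j)) ^ b := by
            refine mul_lt_mul'' (Real.rpow_lt_rpow hc0.le hp.2 ha0)
              (Real.rpow_lt_rpow hc0.le hq.2 hb0) ?_ ?_
            · exact Real.rpow_nonneg hc0.le a
            · exact Real.rpow_nonneg hc0.le b
        _ = ∏ j ∈ V, ((1 - (∑ k, A j k * Real.exp (p k)) / d j) ^ a *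
              (1 - (∑ k, A j k * Real.exp (q k)) / d j) ^ b) := by
            rw [← Real.finset_prod_rpow _ _ (fun j _ => (hWp j).le) a,
              ← Real.finset_prod_rpow _ _ (fun j _ => (hWq j).le) b,
              ← Finset.prod_mul_distrib]
        _ ≤ ∏ j ∈ V, (1 - (∑ k, A j k * Real.exp ((a • p + b • q) k)) / d j) := by
            refine Finset.prod_le_prod (fun j _ => ?_) hstep
            exact mul_nonneg (Real.rpow_nonneg (hWp j).le a) (Real.rpow_nonneg (hWq j).le b)
  refine ⟨hSconv, ?_⟩
  intro p hp q hq a b ha hb hab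
  rcases eq_or_lt_of_le ha with ha0 | ha0
  · have hb1 : b = 1 := by linarith
    rw [← ha0, hb1]
    simp
  rcases eq_or_lt_of_le hb with hb0 | hb0
  · have ha1 : a = 1 := by linarith
    rw [← hb0, ha1]
    simp
  -- concavity along the segment from p to q
  have hIconv : Convex ℝ {t : ℝ |
      (∀ j, ∑ k, A j k * Real.exp (p k + t * ((fun k => q k - p k) k)) < d j) ∧
      c < ∏ j ∈ Finset.univ.filter (fun j => A j i = 1),
        (1 - (∑ k, A j k * Real.exp (p k + t * ((fun k => q k - p k) k))) / d j)} := by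
    intro t1 ht1 t2 ht2 e f he hf hef
    have h1 : (fun k => p k + (e • t1 + f • t2) * (q k - p k))
        = e • (fun k => p k + t1 * (q k - p k)) + f • (fun k => p k + t2 * (q k - p k)) := by
      funext k
      simp only [Pi.add_apply, Pi.smul_apply, smul_eq_mul]
      linear_combination (-(p k)) * hef
    have hm := hSconv ht1 ht2 he hf hef
    show (fun k => p k + (e • t1 + f • t2) * (q k - p k)) ∈ { y : Fin r → ℝ |
      (∀ j, ∑ k, A j k * Real.exp (y k) < d j) ∧
      c < ∏ j ∈ V, (1 - (∑ k, A j k * Real.exp (y k)) / d j) }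
    rw [h1]
    exact hm
  have hseg := segment_concave l r A hA0 d hd i hi c hc F F' F'' hF' hF'' hF'nonneg hkey
    p (fun k => q k - p k) hIconv
  have h0I : (0:ℝ) ∈ {t : ℝ |
      (∀ j, ∑ k, A j k * Real.exp (p k + t * ((fun k => q k - p k) k)) < d j) ∧
      c < ∏ j ∈ Finset.univ.filter (fun j => A j i = 1),
        (1 - (∑ k, A j k * Real.exp (p k + t * ((fun k => q k - p k) k))) / d j)} := by
    simp only [Set.mem_setOf_eq, zero_mul, add_zero]
    exact hp
  have h1I : (1:ℝ) ∈ {t : ℝ |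
      (∀ j, ∑ k, A j k * Real.exp (p k + t * ((fun k => q k - p k) k)) < d j) ∧
      c < ∏ j ∈ Finset.univ.filter (fun j => A j i = 1),
        (1 - (∑ k, A j k * Real.exp (p k + t * ((fun k => q k - p k) k))) / d j)} := by
    simp only [Set.mem_setOf_eq, one_mul,
      show ∀ a b : ℝ, a + (b - a) = b from fun a b => by ring]
    exact hq
  have hval := hseg.2 h0I h1I ha hb hab
  simp only [smul_eq_mul, mul_zero, mul_one, zero_add, zero_mul, add_zero,
    show ∀ a b : ℝ, a + 1 * (b - a) = b from fun a b => by ring,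
    show ∀ a b : ℝ, a + 0 * (b - a) = a from fun a b => by ring] at hval
  have ecomb : a • p + b • q = (fun k => p k + b * (q k - p k)) := by
    funext k
    simp only [Pi.add_apply, Pi.smul_apply, smul_eq_mul]
    linear_combination (p k) * hab
  rw [ecomb]
  simpa [smul_eq_mul] using hval
end

section
/- Let n ≥ 2 be an integer and let t ∈ (0,1). Then sup { ∑_{ι=1}^{n−1} 1/b_ι : b ∈ ℝ^n, 0 < b_ι < 1 for all ι, and ∏_{ι=1}^n b_ι ≥ t } = n − 2 + 1/t. In particular, for every b ∈ (0,1)^n with ∏_{ι=1}^n b_ι ≥ t one has ∑_{ι=1}^{n−1} 1/b_ι ≤ n − 2 + 1/t, and this bound is the least upper bound. -/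
lemma aux_sum_inv {ι : Type*} [DecidableEq ι] (s : Finset ι) (b : ι → ℝ)
    (hb : ∀ i ∈ s, 0 < b i ∧ b i ≤ 1) :
    ∑ i ∈ s, 1 / b i + 1 ≤ s.card + 1 / ∏ i ∈ s, b i := by
  induction s using Finset.induction_on with
  | empty => simp
  | @insert a s ha ih =>
    have hba := hb a (Finset.mem_insert_self a s)
    have hb' : ∀ i ∈ s, 0 < b i ∧ b i ≤ 1 := fun i hi => hb i (Finset.mem_insert_of_mem hi)
    have ih' := ih hb'
    have hPpos : 0 < ∏ i ∈ s, b i := Finset.prod_pos fun i hi => (hb' i hi).1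
    have hPle : ∏ i ∈ s, b i ≤ 1 :=
      Finset.prod_le_one (fun i hi => (hb' i hi).1.le) (fun i hi => (hb' i hi).2)
    rw [Finset.sum_insert ha, Finset.prod_insert ha, Finset.card_insert_of_notMem ha]
    have hxP : 0 < b a * ∏ i ∈ s, b i := mul_pos hba.1 hPpos
    have key : 1 / b a + 1 / ∏ i ∈ s, b i ≤ 1 + 1 / (b a * ∏ i ∈ s, b i) := by
      rw [div_add_div _ _ hba.1.ne' hPpos.ne', div_le_iff₀ hxP]
      have h : (1 - b a) * (1 - ∏ i ∈ s, b i) ≥ 0 :=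
        mul_nonneg (by linarith [hba.2]) (by linarith)
      field_simp
      nlinarith [hba.1, hPpos, mul_one_div_cancel hba.1.ne']
    push_cast
    linarith

/-- Lemma 1 of the paper: for `n ≥ 2` and `t ∈ (0,1)`,
`sup { ∑_{ι<n-1} 1/b_ι : b ∈ (0,1)^n, ∏ ι b_ι ≥ t } = n − 2 + 1/t`. -/
theorem sup_sum_inv_of_prod_ge
    (n : ℕ) (hn : 2 ≤ n) (t : ℝ) (ht : t ∈ Set.Ioo (0 : ℝ) 1) :
    IsLUB
      { s : ℝ | ∃ b : Fin n → ℝ,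
          (∀ ι, b ι ∈ Set.Ioo (0 : ℝ) 1) ∧ t ≤ ∏ ι, b ι ∧
          s = ∑ ι ∈ Finset.univ.filter (fun ι : Fin n => (ι : ℕ) < n - 1), 1 / b ι }
      ((n : ℝ) - 2 + 1 / t) := by
  set F := Finset.univ.filter (fun ι : Fin n => (ι : ℕ) < n - 1) with hF
  have hFcard : F.card = n - 1 := by
    have : F = Finset.Iio (⟨n - 1, by omega⟩ : Fin n) := by
      ext ι; simp [hF, Fin.lt_def]
    rw [this, Fin.card_Iio]
  constructor
  · -- upper bound
    rintro s ⟨b, hb, hp, rfl⟩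
    have hble : ∀ i ∈ F, 0 < b i ∧ b i ≤ 1 := fun i _ => ⟨(hb i).1, (hb i).2.le⟩
    have haux := aux_sum_inv F b hble
    have hsplit := Finset.prod_filter_mul_prod_filter_not Finset.univ
      (fun ι : Fin n => (ι : ℕ) < n - 1) b
    have hcpos : 0 < ∏ ι ∈ Finset.univ.filter (fun ι : Fin n => ¬ (ι : ℕ) < n - 1), b ι :=
      Finset.prod_pos fun i _ => (hb i).1
    have hcle : ∏ ι ∈ Finset.univ.filter (fun ι : Fin n => ¬ (ι : ℕ) < n - 1), b ι ≤ 1 :=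
      Finset.prod_le_one (fun i _ => (hb i).1.le) (fun i _ => (hb i).2.le)
    have hFpos : 0 < ∏ i ∈ F, b i := Finset.prod_pos fun i _ => (hb i).1
    have hFge : t ≤ ∏ i ∈ F, b i := by
      calc t ≤ ∏ ι, b ι := hp
        _ = (∏ i ∈ F, b i) * ∏ ι ∈ Finset.univ.filter (fun ι : Fin n => ¬ (ι : ℕ) < n - 1), b ι := hsplit.symm
        _ ≤ ∏ i ∈ F, b i := mul_le_of_le_one_right hFpos.le hcle
    have hinv : 1 / ∏ i ∈ F, b i ≤ 1 / t := one_div_le_one_div_of_le ht.1 hFge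
    have hcast : ((F.card : ℝ)) = (n : ℝ) - 1 := by
      rw [hFcard]; push_cast [Nat.cast_sub (by omega : 1 ≤ n)]; ring
    rw [hcast] at haux
    linarith
  · -- least upper bound
    intro y hy
    have hj : n - 2 < n := by omega
    set j : Fin n := ⟨n - 2, hj⟩ with hjdef
    set L : ℝ := (n : ℝ) - 2 + 1 / t with hL
    set g : ℝ → ℝ := fun δ => ((n : ℝ) - 2) / (1 - δ) + (1 - δ) ^ (n - 1) / t with hg
    have hgc : Filter.Tendsto g (nhdsWithin 0 (Set.Ioi 0)) (nhds L) := by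
      have hc : ContinuousAt g 0 := by
        apply ContinuousAt.add
        · exact (continuousAt_const.div (continuousAt_const.sub continuousAt_id) (by norm_num))
        · exact ((continuousAt_const.sub continuousAt_id).pow _).div continuousAt_const ht.1.ne'
      have hg0 : g 0 = L := by simp [hg, hL]
      exact (hg0 ▸ hc.tendsto).mono_left nhdsWithin_le_nhds
    have hpow : Filter.Tendsto (fun δ : ℝ => (1 - δ) ^ (n - 1)) (nhdsWithin 0 (Set.Ioi 0)) (nhds 1) := by
      have : ContinuousAt (fun δ : ℝ => (1 - δ) ^ (n - 1)) 0 :=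
        (continuousAt_const.sub continuousAt_id).pow _
      refine Filter.Tendsto.mono_left ?_ nhdsWithin_le_nhds
      simpa using this.tendsto
    have hev1 : ∀ᶠ δ in nhdsWithin 0 (Set.Ioi 0), t < (1 - δ) ^ (n - 1) :=
      hpow.eventually_const_lt ht.2
    have hev2 : ∀ᶠ δ : ℝ in nhdsWithin 0 (Set.Ioi 0), δ < 1 :=
      Filter.Eventually.filter_mono nhdsWithin_le_nhds (eventually_lt_nhds zero_lt_one)
    have hev : ∀ᶠ δ in nhdsWithin 0 (Set.Ioi 0), g δ ≤ y := by
      filter_upwards [hev1, hev2, self_mem_nhdsWithin] with δ h1 h2 hδ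
      have hδ0 : (0 : ℝ) < δ := hδ
      have h1δ : 0 < 1 - δ := by linarith
      have hpowpos : 0 < (1 - δ) ^ (n - 1) := pow_pos h1δ _
      set b : Fin n → ℝ := fun ι => if ι = j then t / (1 - δ) ^ (n - 1) else 1 - δ with hb
      apply hy
      refine ⟨b, ?_, ?_, ?_⟩
      · intro ι
        by_cases hι : ι = j
        · simp only [hb, hι, if_pos rfl]
          exact ⟨div_pos ht.1 hpowpos, (div_lt_one hpowpos).2 h1⟩
        · simp only [hb, if_neg hι]
          constructor <;> linarith
      · have hprod : ∏ ι, b ι = t := by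
          rw [← Finset.mul_prod_erase Finset.univ b (Finset.mem_univ j)]
          have : ∏ ι ∈ Finset.univ.erase j, b ι = (1 - δ) ^ (n - 1) := by
            rw [Finset.prod_congr rfl (fun i hi => ?_), Finset.prod_const,
              Finset.card_erase_of_mem (Finset.mem_univ j), Finset.card_univ,
              Fintype.card_fin]
            simp only [hb, if_neg (Finset.mem_erase.1 hi).1]
          rw [this]
          simp only [hb, if_pos rfl]
          field_simp
        rw [hprod]
      · have hjF : j ∈ F := by
          simp [hF, hjdef]; omega
        rw [← Finset.add_sum_erase F (fun ι => 1 / b ι) hjF]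
        have hrest : ∑ ι ∈ F.erase j, 1 / b ι = ((n : ℝ) - 2) / (1 - δ) := by
          rw [Finset.sum_congr rfl (fun i hi => ?_), Finset.sum_const,
            Finset.card_erase_of_mem hjF, hFcard]
          · have : ((n - 1 - 1 : ℕ) : ℝ) = (n : ℝ) - 2 := by
              push_cast [Nat.cast_sub (by omega : 1 ≤ n - 1), Nat.cast_sub (by omega : 1 ≤ n)]
              ring
            rw [nsmul_eq_mul, this, div_eq_mul_one_div]
          · simp only [hb, if_neg (Finset.mem_erase.1 hi).1]
        have hbj : 1 / b j = (1 - δ) ^ (n - 1) / t := by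
          simp only [hb, if_pos rfl, one_div_div]
        rw [hrest, hbj]
        simp [hg]
        ring
    exact le_of_tendsto hgc hev
end

section
/- Let n ≥ 2 be an integer, let t ∈ (0,1), and let β ∈ (0,1). Then sup { β/b_1 + ∑_{ι=2}^{n} 1/b_ι : b ∈ ℝ^n, 0 < b_ι < 1 for all ι, and ∏_{ι=1}^n b_ι = t } = n − 2 + β + 1/t. In particular, for every b ∈ (0,1)^n with ∏_{ι=1}^n b_ι = t one has β/b_1 + ∑_{ι=2}^{n} 1/b_ι ≤ n − 2 + β + 1/t, and this bound is the least upper bound. -/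
lemma aux_two (x y : ℝ) (hx0 : 0 < x) (hx1 : x ≤ 1) (hy0 : 0 < y) (hy1 : y ≤ 1) :
    1/x + 1/y ≤ 1 + 1/(x*y) := by
  rw [div_add_div _ _ hx0.ne' hy0.ne', div_le_iff₀ (by positivity), one_div,
    add_mul, inv_mul_cancel₀ (by positivity)]
  nlinarith [mul_nonneg (sub_nonneg.2 hx1) (sub_nonneg.2 hy1)]

lemma aux_beta (β x y : ℝ) (hx0 : 0 < x) (hx1 : x ≤ 1) (hy0 : 0 < y) (hby : β * y ≤ 1) :
    β/x + 1/y ≤ β + 1/(x*y) := by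
  rw [div_add_div _ _ hx0.ne' hy0.ne', one_div (x*y), ← sub_nonneg]
  have h : 0 ≤ (1 - x) * (1 - β * y) := by nlinarith [sub_nonneg.2 hx1]
  have heq : β + (x*y)⁻¹ - (β*y + x*1)/(x*y) = ((1-x)*(1-β*y))/(x*y) := by
    field_simp; ring
  rw [heq]; positivity

lemma sum_inv_le {ι : Type*} (s : Finset ι) (f : ι → ℝ)
    (h : ∀ i ∈ s, f i ∈ Set.Ioo (0:ℝ) 1) :
    ∑ i ∈ s, 1 / f i ≤ (s.card : ℝ) - 1 + 1 / ∏ i ∈ s, f i := by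
  classical
  revert h
  induction s using Finset.induction_on with
  | empty => intro _; simp
  | @insert a s ha ih =>
    intro h
    have hf := h a (Finset.mem_insert_self a s)
    have hrest : ∀ i ∈ s, f i ∈ Set.Ioo (0:ℝ) 1 :=
      fun i hi => h i (Finset.mem_insert_of_mem hi)
    rw [Finset.sum_insert ha, Finset.prod_insert ha, Finset.card_insert_of_notMem ha]
    have hP0 : 0 < ∏ i ∈ s, f i := Finset.prod_pos fun i hi => (hrest i hi).1
    have hP1 : ∏ i ∈ s, f i ≤ 1 :=
      Finset.prod_le_one (fun i hi => (hrest i hi).1.le) (fun i hi => (hrest i hi).2.le)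
    have h2 := aux_two (f a) (∏ i ∈ s, f i) hf.1 hf.2.le hP0 hP1
    have hih := ih hrest
    push_cast
    linarith



/-- Lemma 2 of the paper: for `n ≥ 2`, `t ∈ (0,1)` and `β ∈ (0,1)`,
`sup { β/b_1 + ∑_{ι=2}^n 1/b_ι : b ∈ (0,1)^n, ∏ ι b_ι = t } = n − 2 + β + 1/t`. -/
theorem sup_weighted_sum_inv_of_prod_eq
    (n : ℕ) (hn : 2 ≤ n) (t : ℝ) (ht : t ∈ Set.Ioo (0 : ℝ) 1)
    (β : ℝ) (hβ : β ∈ Set.Ioo (0 : ℝ) 1) :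
    IsLUB
      { s : ℝ | ∃ b : Fin n → ℝ,
          (∀ ι, b ι ∈ Set.Ioo (0 : ℝ) 1) ∧ (∏ ι, b ι) = t ∧
          s = β / b ⟨0, by omega⟩ +
              ∑ ι ∈ Finset.univ.filter (fun ι : Fin n => (ι : ℕ) ≠ 0), 1 / b ι }
      ((n : ℝ) - 2 + β + 1 / t) := by
  classical
  obtain ⟨ht0, ht1⟩ := ht
  obtain ⟨hβ0, hβ1⟩ := hβ
  have hzlt : 0 < n := by omega
  have holt : 1 < n := by omega
  set z : Fin n := ⟨0, hzlt⟩ with hzdef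
  set o : Fin n := ⟨1, holt⟩ with hodef
  have hzo : z ≠ o := by simp [hzdef, hodef, Fin.ext_iff]
  have hfilter : Finset.univ.filter (fun ι : Fin n => (ι : ℕ) ≠ 0) = Finset.univ.erase z := by
    ext ι
    simp [Finset.mem_erase, Fin.ext_iff, hzdef]
  have hcardE : (Finset.univ.erase z).card = n - 1 := by
    rw [Finset.card_erase_of_mem (Finset.mem_univ z), Finset.card_univ, Fintype.card_fin]
  have hcastn1 : ((n - 1 : ℕ) : ℝ) = (n : ℝ) - 1 := by
    push_cast [Nat.cast_sub (by omega : 1 ≤ n)]; ring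
  constructor
  · rintro x ⟨b, hb, hprod, rfl⟩
    rw [hfilter]
    set P := ∏ i ∈ Finset.univ.erase z, b i with hPdef
    have hP0 : 0 < P := Finset.prod_pos fun i _ => (hb i).1
    have hP1 : P ≤ 1 := Finset.prod_le_one (fun i _ => (hb i).1.le) (fun i _ => (hb i).2.le)
    have hprod' : b z * P = t := by
      rw [hPdef, Finset.mul_prod_erase Finset.univ b (Finset.mem_univ z), hprod]
    have hsum := sum_inv_le (Finset.univ.erase z) b (fun i _ => hb i)
    rw [hcardE, hcastn1] at hsum
    have hbeta := aux_beta β (b z) P (hb z).1 (hb z).2.le hP0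
      (by nlinarith)
    rw [hprod'] at hbeta
    have hbz : b (⟨0, by omega⟩ : Fin n) = b z := rfl
    rw [hbz]
    linarith
  · intro u hu
    set g : ℝ → ℝ := fun s => β / s + ((n : ℝ) - 2) / s + s ^ (n - 1) / t with hgdef
    have hg1 : Filter.Tendsto g (nhdsWithin 1 (Set.Iio 1)) (nhds ((n : ℝ) - 2 + β + 1 / t)) := by
      have hc : ContinuousAt g 1 := by
        apply ContinuousAt.add
        apply ContinuousAt.add
        · exact (continuousAt_const.div continuousAt_id one_ne_zero)
        · exact (continuousAt_const.div continuousAt_id one_ne_zero)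
        · exact ((continuousAt_id.pow _).div continuousAt_const ht0.ne')
      have hval : g 1 = (n : ℝ) - 2 + β + 1 / t := by
        simp [hgdef]; ring
      rw [← hval]
      exact hc.tendsto.mono_left nhdsWithin_le_nhds
    refine le_of_tendsto hg1 ?_
    have hopen : ∀ᶠ s in nhds (1 : ℝ), 0 < s ∧ t < s ^ (n - 1) := by
      have h1 : ∀ᶠ s in nhds (1 : ℝ), 0 < s := eventually_gt_nhds one_pos
      have hc : ContinuousAt (fun s : ℝ => s ^ (n - 1)) 1 := by fun_prop
      have h2 : ∀ᶠ s in nhds (1 : ℝ), t < s ^ (n - 1) := by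
        have := hc.tendsto.eventually (eventually_gt_nhds (by simpa using ht1))
        simpa using this
      exact h1.and h2
    filter_upwards [hopen.filter_mono nhdsWithin_le_nhds, self_mem_nhdsWithin]
      with s hs hs1
    obtain ⟨hs0, hst⟩ := hs
    have hs1' : s < 1 := hs1
    have hpow : 0 < s ^ (n - 1) := pow_pos hs0 _
    apply hu
    refine ⟨fun ι => if ι = o then t / s ^ (n - 1) else s, ?_, ?_, ?_⟩
    · intro ι
      by_cases hι : ι = o
      · simp only [hι, if_pos rfl]
        exact ⟨by positivity, (div_lt_one hpow).2 hst⟩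
      · simp only [if_neg hι]
        exact ⟨hs0, hs1'⟩
    · rw [← Finset.mul_prod_erase Finset.univ _ (Finset.mem_univ o), if_pos rfl]
      have hrest : ∏ i ∈ Finset.univ.erase o,
          (if i = o then t / s ^ (n - 1) else s) = s ^ (n - 1) := by
        rw [Finset.prod_congr rfl (fun i hi => if_neg (Finset.mem_erase.1 hi).1),
          Finset.prod_const, Finset.card_erase_of_mem (Finset.mem_univ o),
          Finset.card_univ, Fintype.card_fin]
      rw [hrest, div_mul_cancel₀ _ hpow.ne']
    · beta_reduce
      rw [if_neg hzo, hfilter]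
      have hoE : o ∈ Finset.univ.erase z := Finset.mem_erase.2 ⟨hzo.symm, Finset.mem_univ o⟩
      rw [← Finset.add_sum_erase _ _ hoE, if_pos rfl, one_div_div]
      have hrest2 : ∑ i ∈ (Finset.univ.erase z).erase o,
          (1 / if i = o then t / s ^ (n - 1) else s) = ((n : ℝ) - 2) * (1 / s) := by
        rw [Finset.sum_congr rfl (fun i hi => by
          rw [if_neg (Finset.mem_erase.1 hi).1]), Finset.sum_const,
          Finset.card_erase_of_mem hoE, hcardE, nsmul_eq_mul]
        congr 1
        push_cast [Nat.cast_sub (by omega : 1 ≤ n - 1), hcastn1]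
        ring
      rw [hrest2, hgdef]
      ring
end

section
/- For every ω ∈ [0, 1/2], 1 + (1+ω)·log₂((1+ω)/2) + (1−ω)·log₂((1−ω)/2) ≤ 0. Consequently the secret key fraction f_sk(ω) := max(0, 1 + (1+ω)·log₂((1+ω)/2) + (1−ω)·log₂((1−ω)/2)) satisfies f_sk(ω) = 0 for all ω ∈ [0, 1/2], so c^sk := sup{z ∈ [0,1] : f_sk(z) = 0} ≥ 1/2. -/
lemma skf_aux (ω : ℝ) (hω : ω ∈ Set.Icc (0 : ℝ) (1 / 2)) :
    1 + (1 + ω) * Real.logb 2 ((1 + ω) / 2) + (1 - ω) * Real.logb 2 ((1 - ω) / 2) ≤ 0 := by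
  obtain ⟨h0, h1⟩ := hω
  have hL : (0.6931471803 : ℝ) < Real.log 2 := Real.log_two_gt_d9
  have hLpos : (0 : ℝ) < Real.log 2 := by linarith
  have hp : (0 : ℝ) < 1 + ω := by linarith
  have hm : (0 : ℝ) < 1 - ω := by linarith
  have hL1 : Real.log (1 + ω) ≤ ω := by
    have := Real.log_le_sub_one_of_pos hp; linarith
  have hL2 : Real.log (1 - ω) ≤ -ω := by
    have := Real.log_le_sub_one_of_pos hm; linarith
  have e1 : Real.logb 2 ((1 + ω) / 2) = (Real.log (1 + ω) - Real.log 2) / Real.log 2 := by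
    rw [Real.logb, Real.log_div hp.ne' two_ne_zero]
  have e2 : Real.logb 2 ((1 - ω) / 2) = (Real.log (1 - ω) - Real.log 2) / Real.log 2 := by
    rw [Real.logb, Real.log_div hm.ne' two_ne_zero]
  rw [e1, e2]
  have key : 1 + (1 + ω) * ((Real.log (1 + ω) - Real.log 2) / Real.log 2)
      + (1 - ω) * ((Real.log (1 - ω) - Real.log 2) / Real.log 2)
      = ((1 + ω) * Real.log (1 + ω) + (1 - ω) * Real.log (1 - ω) - Real.log 2)
        * (Real.log 2)⁻¹ := by
    field_simp
    ring
  rw [key]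
  apply mul_nonpos_of_nonpos_of_nonneg
  · nlinarith [sq_nonneg ω]
  · positivity

/-- the secret key fraction of a Werner state vanishes on `[0, 1/2]`,
hence its vanishing threshold `c^sk` is at least `1/2` (Cond. 1). -/
theorem secret_key_fraction_vanishes_below_half :
    (∀ ω ∈ Set.Icc (0 : ℝ) (1 / 2),
      1 + (1 + ω) * Real.logb 2 ((1 + ω) / 2) + (1 - ω) * Real.logb 2 ((1 - ω) / 2) ≤ 0) ∧
    (∀ ω ∈ Set.Icc (0 : ℝ) (1 / 2),
      max 0 (1 + (1 + ω) * Real.logb 2 ((1 + ω) / 2) +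
        (1 - ω) * Real.logb 2 ((1 - ω) / 2)) = 0) ∧
    1 / 2 ≤ sSup { z : ℝ | z ∈ Set.Icc (0 : ℝ) 1 ∧
      max 0 (1 + (1 + z) * Real.logb 2 ((1 + z) / 2) +
        (1 - z) * Real.logb 2 ((1 - z) / 2)) = 0 } := by
  refine ⟨skf_aux, fun ω hω => max_eq_left (skf_aux ω hω), ?_⟩
  apply le_csSup
  · exact ⟨1, fun z hz => hz.1.2⟩
  · exact ⟨⟨by norm_num, by norm_num⟩, max_eq_left (skf_aux _ ⟨by norm_num, le_refl _⟩)⟩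
end

section
/- Let l, r be positive integers, let A be an l×r matrix with entries a_{ji} ∈ {0,1}, let d_1,…,d_l > 0, and fix i ∈ [r]. For x ∈ ℝ^r write ⟨A_j, x⟩ := ∑_{k=1}^r a_{jk} x_k. Then the function x ↦ −ln(x_i) − ln((3·∏_{j : a_{ji}=1}(1 − ⟨A_j, x⟩/d_j) − 1)/4) is convex on the set D' := { x ∈ ℝ^r : x_k > 0 for all k, ⟨A_j, x⟩ < d_j for all j, and ∏_{j : a_{ji}=1}(1 − ⟨A_j, x⟩/d_j) > 1/3 }. -/
private lemma superadd {x1 x2 a b : ℝ} (hx1 : 0 ≤ x1) (hx2 : 0 ≤ x2)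
    (ha : 0 ≤ a) (hb : 0 ≤ b) (hab : a + b = 1) :
    x1 ^ a * x2 ^ b + 1 ≤ (x1 + 1) ^ a * (x2 + 1) ^ b := by
  have hu : (0:ℝ) < x1 + 1 := by linarith
  have hv : (0:ℝ) < x2 + 1 := by linarith
  have hua : (0:ℝ) < (x1 + 1) ^ a := Real.rpow_pos_of_pos hu a
  have hvb : (0:ℝ) < (x2 + 1) ^ b := Real.rpow_pos_of_pos hv b
  have h1 : x1 ^ a * x2 ^ b = ((x1 / (x1+1)) ^ a * (x2 / (x2+1)) ^ b) * ((x1+1) ^ a * (x2+1) ^ b) := by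
    rw [Real.div_rpow hx1 hu.le, Real.div_rpow hx2 hv.le]
    field_simp
  have h2 : (1:ℝ) = ((1 / (x1+1)) ^ a * (1 / (x2+1)) ^ b) * ((x1+1) ^ a * (x2+1) ^ b) := by
    rw [Real.div_rpow zero_le_one hu.le, Real.div_rpow zero_le_one hv.le, Real.one_rpow,
      Real.one_rpow]
    field_simp
  have g1 : (x1 / (x1+1)) ^ a * (x2 / (x2+1)) ^ b ≤ a * (x1 / (x1+1)) + b * (x2 / (x2+1)) :=
    Real.geom_mean_le_arith_mean2_weighted ha hb (by positivity) (by positivity) hab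
  have g2 : (1 / (x1+1)) ^ a * (1 / (x2+1)) ^ b ≤ a * (1 / (x1+1)) + b * (1 / (x2+1)) :=
    Real.geom_mean_le_arith_mean2_weighted ha hb (by positivity) (by positivity) hab
  have e1 : a * (x1 / (x1+1)) + a * (1 / (x1+1)) = a := by
    field_simp
  have e2 : b * (x2 / (x2+1)) + b * (1 / (x2+1)) = b := by
    field_simp
  have key : (x1 / (x1+1)) ^ a * (x2 / (x2+1)) ^ b + (1 / (x1+1)) ^ a * (1 / (x2+1)) ^ b ≤ 1 := by
    linarith
  calc x1 ^ a * x2 ^ b + 1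
      = ((x1 / (x1+1)) ^ a * (x2 / (x2+1)) ^ b + (1 / (x1+1)) ^ a * (1 / (x2+1)) ^ b)
        * ((x1+1) ^ a * (x2+1) ^ b) := by rw [add_mul, ← h1, ← h2]
    _ ≤ 1 * ((x1+1) ^ a * (x2+1) ^ b) :=
        mul_le_mul_of_nonneg_right key (by positivity)
    _ = (x1+1) ^ a * (x2+1) ^ b := one_mul _

private lemma log_concave2 {p1 p2 a b : ℝ} (hp1 : 0 < p1) (hp2 : 0 < p2)
    (ha : 0 ≤ a) (hb : 0 ≤ b) (hab : a + b = 1) :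
    a * Real.log p1 + b * Real.log p2 ≤ Real.log (a * p1 + b * p2) := by
  have h := Real.geom_mean_le_arith_mean2_weighted ha hb hp1.le hp2.le hab
  have hpos : (0:ℝ) < p1 ^ a * p2 ^ b := by positivity
  calc a * Real.log p1 + b * Real.log p2
      = Real.log (p1 ^ a * p2 ^ b) := by
        rw [Real.log_mul (by positivity) (by positivity), Real.log_rpow hp1, Real.log_rpow hp2]
    _ ≤ Real.log (a * p1 + b * p2) := Real.log_le_log hpos h

/-- a route using negativity as its entanglement measure contributes a
convex term `x ↦ −ln x_i − ln((3∏_j(1 − ⟨A_j,x⟩/d_j) − 1)/4)` to the QNUM objective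
in the rate variables `x`, on the region where the end-to-end Werner parameter exceeds `1/3`. -/
theorem negativity_contribution_convex_in_rates
    (l r : ℕ) (hl : 0 < l) (hr : 0 < r)
    (A : Fin l → Fin r → ℝ) (hA : ∀ j i, A j i = 0 ∨ A j i = 1)
    (d : Fin l → ℝ) (hd : ∀ j, 0 < d j) (i : Fin r) :
    ConvexOn ℝ
      { x : Fin r → ℝ |
        (∀ k, 0 < x k) ∧ (∀ j, ∑ k, A j k * x k < d j) ∧
        1 / 3 < ∏ j ∈ Finset.univ.filter (fun j => A j i = 1),
            (1 - (∑ k, A j k * x k) / d j) }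
      (fun x => -Real.log (x i) -
        Real.log ((3 * ∏ j ∈ Finset.univ.filter (fun j => A j i = 1),
            (1 - (∑ k, A j k * x k) / d j) - 1) / 4)) := by
  set T := Finset.univ.filter (fun j => A j i = 1) with hT
  set S : Fin l → (Fin r → ℝ) → ℝ := fun j x => ∑ k, A j k * x k with hS
  set P : (Fin r → ℝ) → ℝ := fun x => ∏ j ∈ T, (1 - S j x / d j) with hP
  have Slin : ∀ (j : Fin l) (x y : Fin r → ℝ) (a b : ℝ),
      S j (a • x + b • y) = a * S j x + b * S j y := by
    intro j x y a b
    simp only [hS, Pi.add_apply, Pi.smul_apply, smul_eq_mul, Finset.mul_sum]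
    rw [← Finset.sum_add_distrib]
    exact Finset.sum_congr rfl fun k _ => by ring
  have factor_pos : ∀ {x : Fin r → ℝ}, (∀ j, S j x < d j) → ∀ j ∈ T, 0 < 1 - S j x / d j := by
    intro x hx j _
    rw [sub_pos, div_lt_one (hd j)]
    exact hx j
  have Pbound : ∀ {x y : Fin r → ℝ} {a b : ℝ}, 0 ≤ a → 0 ≤ b → a + b = 1 →
      (∀ j, S j x < d j) → (∀ j, S j y < d j) →
      P x ^ a * P y ^ b ≤ P (a • x + b • y) := by
    intro x y a b ha hb hab hx hy
    have hpx := factor_pos hx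
    have hpy := factor_pos hy
    calc P x ^ a * P y ^ b
        = ∏ j ∈ T, ((1 - S j x / d j) ^ a * (1 - S j y / d j) ^ b) := by
          rw [Finset.prod_mul_distrib,
            Real.finset_prod_rpow T _ (fun j hj => (hpx j hj).le) a,
            Real.finset_prod_rpow T _ (fun j hj => (hpy j hj).le) b]
      _ ≤ ∏ j ∈ T, (1 - S j (a • x + b • y) / d j) := by
          apply Finset.prod_le_prod
          · intro j hj
            exact mul_nonneg (Real.rpow_nonneg (hpx j hj).le a)
              (Real.rpow_nonneg (hpy j hj).le b)
          · intro j hj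
            have hfac : 1 - S j (a • x + b • y) / d j
                = a * (1 - S j x / d j) + b * (1 - S j y / d j) := by
              rw [Slin, add_div, mul_div_assoc, mul_div_assoc]
              linear_combination (-1 : ℝ) * hab
            rw [hfac]
            exact Real.geom_mean_le_arith_mean2_weighted ha hb (hpx j hj).le (hpy j hj).le hab
  constructor
  · -- convexity of the set
    rintro x ⟨hx1, hx2, hx3⟩ y ⟨hy1, hy2, hy3⟩ a b ha hb hab
    rcases eq_or_lt_of_le ha with ha0 | ha0
    · obtain rfl : b = 1 := by linarith
      have hz : a • x + (1:ℝ) • y = y := by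
        ext k; simp [← ha0]
      rw [hz]
      exact ⟨hy1, hy2, hy3⟩
    · refine ⟨?_, ?_, ?_⟩
      · intro k
        have := hx1 k; have := hy1 k
        simp only [Pi.add_apply, Pi.smul_apply, smul_eq_mul]
        nlinarith
      · intro j
        show S j (a • x + b • y) < d j
        rw [Slin]
        have h1 : a * S j x < a * d j := by
          exact mul_lt_mul_of_pos_left (hx2 j) ha0
        have h2 : b * S j y ≤ b * d j := mul_le_mul_of_nonneg_left (hy2 j).le hb
        have h3 : a * d j + b * d j = d j := by rw [← add_mul, hab, one_mul]
        linarith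
      · show 1 / 3 < P (a • x + b • y)
        have h1 : P x ^ a * P y ^ b ≤ P (a • x + b • y) := Pbound ha hb hab hx2 hy2
        have h3 : ((1:ℝ)/3) ^ a * ((1:ℝ)/3) ^ b = 1/3 := by
          rw [← Real.rpow_add (by norm_num), hab, Real.rpow_one]
        have hstep : ((1:ℝ)/3) ^ a * ((1:ℝ)/3) ^ b < P x ^ a * P y ^ b := by
          calc ((1:ℝ)/3) ^ a * ((1:ℝ)/3) ^ b
              < P x ^ a * ((1:ℝ)/3) ^ b := by
                exact mul_lt_mul_of_pos_right (Real.rpow_lt_rpow (by norm_num) hx3 ha0)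
                  (Real.rpow_pos_of_pos (by norm_num) b)
            _ ≤ P x ^ a * P y ^ b := by
                exact mul_le_mul_of_nonneg_left (Real.rpow_le_rpow (by norm_num) hy3.le hb)
                  (Real.rpow_nonneg (by positivity) a)
        rw [h3] at hstep
        linarith
  · -- the convexity inequality
    rintro x ⟨hx1, hx2, hx3⟩ y ⟨hy1, hy2, hy3⟩ a b ha hb hab
    have hPx : (1/3 : ℝ) < P x := hx3
    have hPy : (1/3 : ℝ) < P y := hy3
    have hPz : P x ^ a * P y ^ b ≤ P (a • x + b • y) := Pbound ha hb hab hx2 hy2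
    have hlog1 : a * Real.log (x i) + b * Real.log (y i)
        ≤ Real.log (a * x i + b * y i) := log_concave2 (hx1 i) (hy1 i) ha hb hab
    have h3x : (0:ℝ) < 3 * P x - 1 := by linarith
    have h3y : (0:ℝ) < 3 * P y - 1 := by linarith
    have hsup : (3 * P x - 1) ^ a * (3 * P y - 1) ^ b + 1 ≤ (3 * P x) ^ a * (3 * P y) ^ b := by
      simpa using superadd h3x.le h3y.le ha hb hab
    have h3ab : (3 * P x) ^ a * (3 * P y) ^ b = 3 * (P x ^ a * P y ^ b) := by
      rw [Real.mul_rpow (by norm_num) (by linarith), Real.mul_rpow (by norm_num) (by linarith),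
        show (3:ℝ) ^ a * P x ^ a * ((3:ℝ) ^ b * P y ^ b)
          = ((3:ℝ) ^ a * (3:ℝ) ^ b) * (P x ^ a * P y ^ b) by ring,
        ← Real.rpow_add (by norm_num), hab, Real.rpow_one]
    have hchain : (3 * P x - 1) ^ a * (3 * P y - 1) ^ b ≤ 3 * P (a • x + b • y) - 1 := by
      rw [h3ab] at hsup
      linarith
    have hprodpos : (0:ℝ) < (3 * P x - 1) ^ a * (3 * P y - 1) ^ b := by positivity
    have h3z : (0:ℝ) < 3 * P (a • x + b • y) - 1 := by linarith
    have hlog2 : a * Real.log ((3 * P x - 1)/4) + b * Real.log ((3 * P y - 1)/4)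
        ≤ Real.log ((3 * P (a • x + b • y) - 1)/4) := by
      rw [Real.log_div h3x.ne' (by norm_num), Real.log_div h3y.ne' (by norm_num),
        Real.log_div h3z.ne' (by norm_num)]
      have heq : a * Real.log (3 * P x - 1) + b * Real.log (3 * P y - 1)
          = Real.log ((3 * P x - 1) ^ a * (3 * P y - 1) ^ b) := by
        rw [Real.log_mul (by positivity) (by positivity), Real.log_rpow h3x, Real.log_rpow h3y]
      have hle := Real.log_le_log hprodpos hchain
      have expand : a * (Real.log (3 * P x - 1) - Real.log 4)
            + b * (Real.log (3 * P y - 1) - Real.log 4)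
          = (a * Real.log (3 * P x - 1) + b * Real.log (3 * P y - 1))
            - (a + b) * Real.log 4 := by ring
      rw [expand, hab, one_mul, heq]
      linarith
    have hzi : (a • x + b • y) i = a * x i + b * y i := by
      simp [Pi.add_apply, Pi.smul_apply, smul_eq_mul]
    show -Real.log ((a • x + b • y) i) - Real.log ((3 * P (a • x + b • y) - 1)/4)
        ≤ a • (-Real.log (x i) - Real.log ((3 * P x - 1)/4))
          + b • (-Real.log (y i) - Real.log ((3 * P y - 1)/4))
    rw [hzi]
    simp only [smul_eq_mul]
    nlinarith [hlog1, hlog2]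
end

section
/- Let l, r be positive integers, let A be an l×r matrix with entries a_{ji} ∈ {0,1}, let d_1,…,d_l > 0, and fix i ∈ [r]. For y ∈ ℝ^r write ⟨A_j, e^y⟩ := ∑_{k=1}^r a_{jk} e^{y_k} and u_i(y) := ∏_{j : a_{ji}=1}(1 − ⟨A_j, e^y⟩/d_j). Then the function y ↦ −y_i − ln((1 + u_i(y))/2) is convex on the set { y ∈ ℝ^r : ⟨A_j, e^y⟩ < d_j for all j, and u_i(y) > 1/2 }. -/
open Real Finset

/-- Per-link Cauchy–Schwarz: `(∑ c β E)² ≤ (∑ c E)(∑ c β² E)` for nonnegative `c*E`. -/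
lemma cs_link {κ : Type*} [Fintype κ] (c β E : κ → ℝ) (hc : ∀ k, 0 ≤ c k * E k) :
    (∑ k, c k * β k * E k) ^ 2 ≤ (∑ k, c k * E k) * (∑ k, c k * β k ^ 2 * E k) := by
  have h := Finset.sum_mul_sq_le_sq_mul_sq Finset.univ
    (fun k => Real.sqrt (c k * E k)) (fun k => Real.sqrt (c k * E k) * β k)
  have e1 : ∀ k, Real.sqrt (c k * E k) * (Real.sqrt (c k * E k) * β k)
      = c k * β k * E k := by
    intro k
    rw [← mul_assoc, Real.mul_self_sqrt (hc k)]; ring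
  have e2 : ∀ k, Real.sqrt (c k * E k) ^ 2 = c k * E k := fun k => Real.sq_sqrt (hc k)
  have e3 : ∀ k, (Real.sqrt (c k * E k) * β k) ^ 2 = c k * β k ^ 2 * E k := by
    intro k
    rw [mul_pow, Real.sq_sqrt (hc k)]; ring
  simp only [e1, e2, e3] at h
  exact h

/-- Key algebraic inequality: if each `f j ∈ (0,1]`, `q j ≥ 0`, `g j ² ≤ (1-f j) q j`
and `∏ f ≥ 1/2` then `(∑ g/f)² + ∑ (-(q f) - g²)/f² ≤ 0`. -/
lemma key_ineq {ι : Type*} [DecidableEq ι] (T : Finset ι) (f g q : ι → ℝ)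
    (hf0 : ∀ j ∈ T, 0 < f j) (hf1 : ∀ j ∈ T, f j ≤ 1) (hq : ∀ j ∈ T, 0 ≤ q j)
    (hcs : ∀ j ∈ T, g j ^ 2 ≤ (1 - f j) * q j)
    (hu : (1:ℝ)/2 ≤ ∏ j ∈ T, f j) :
    (∑ j ∈ T, g j / f j) ^ 2 + ∑ j ∈ T, (-(q j) * f j - g j ^ 2) / f j ^ 2 ≤ 0 := by
  set S : ℝ := ∑ j ∈ T, (1 - f j) with hS
  have hSf : ∀ j ∈ T, S ≤ f j := by
    intro j hj
    have hfj := hf0 j hj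
    have hlogle : ∀ m ∈ T, 1 - f m ≤ -Real.log (f m) := by
      intro m hm
      have := Real.log_le_sub_one_of_pos (hf0 m hm)
      linarith
    have hprodT : Real.log (∏ m ∈ T, f m) = ∑ m ∈ T, Real.log (f m) :=
      Real.log_prod (fun m hm => (hf0 m hm).ne')
    have hlogu : -Real.log 2 ≤ ∑ m ∈ T, Real.log (f m) := by
      rw [← hprodT]
      have := Real.log_le_log (by norm_num : (0:ℝ) < 1/2) hu
      simpa [Real.log_div, Real.log_one] using this
    -- S = (1 - f j) + ∑_{erase} (1 - f m)
    have hsplit : S = (1 - f j) + ∑ m ∈ T.erase j, (1 - f m) := by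
      rw [hS, ← Finset.add_sum_erase _ _ hj]
    have herase : ∑ m ∈ T.erase j, (1 - f m) ≤ Real.log 2 + Real.log (f j) := by
      have h1 : ∑ m ∈ T.erase j, (1 - f m) ≤ ∑ m ∈ T.erase j, -Real.log (f m) :=
        Finset.sum_le_sum (fun m hm => hlogle m (Finset.mem_of_mem_erase hm))
      have h2 : ∑ m ∈ T.erase j, -Real.log (f m)
          = -(∑ m ∈ T, Real.log (f m)) + Real.log (f j) := by
        rw [← Finset.add_sum_erase _ (fun m => Real.log (f m)) hj, Finset.sum_neg_distrib]
        ring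
      have h3 : -(∑ m ∈ T, Real.log (f m)) ≤ Real.log 2 := by linarith
      linarith
    have hfin : Real.log 2 + Real.log (f j) ≤ 2 * f j - 1 := by
      have h2f : (0:ℝ) < 2 * f j := by linarith
      have := Real.log_le_sub_one_of_pos h2f
      rw [Real.log_mul (by norm_num) hfj.ne'] at this
      linarith
    linarith
  -- Step: (∑ g/f)² ≤ S * ∑ q/f²
  have hstep : (∑ j ∈ T, g j / f j) ^ 2 ≤ S * ∑ j ∈ T, q j / f j ^ 2 := by
    have habs : |∑ j ∈ T, g j / f j| ≤ ∑ j ∈ T, Real.sqrt (1 - f j) * (Real.sqrt (q j) / f j) := by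
      refine (Finset.abs_sum_le_sum_abs _ _).trans (Finset.sum_le_sum ?_)
      intro j hj
      rw [abs_div, abs_of_pos (hf0 j hj)]
      have h4 : |g j| ≤ Real.sqrt ((1 - f j) * q j) := Real.abs_le_sqrt (hcs j hj)
      rw [Real.sqrt_mul (by linarith [hf1 j hj]) (q j)] at h4
      have h5 : Real.sqrt (1 - f j) * (Real.sqrt (q j) / f j)
          = Real.sqrt (1 - f j) * Real.sqrt (q j) / f j := by ring
      rw [h5]
      gcongr
      exact (hf0 j hj).le
    have hcs2 := Finset.sum_mul_sq_le_sq_mul_sq T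
      (fun j => Real.sqrt (1 - f j)) (fun j => Real.sqrt (q j) / f j)
    have hsq : (∑ j ∈ T, g j / f j) ^ 2
        ≤ (∑ j ∈ T, Real.sqrt (1 - f j) * (Real.sqrt (q j) / f j)) ^ 2 := by
      rw [← sq_abs]
      apply pow_le_pow_left₀ (abs_nonneg _) habs
    refine hsq.trans (hcs2.trans_eq ?_)
    congr 1
    · apply Finset.sum_congr rfl
      intro j hj
      exact Real.sq_sqrt (by linarith [hf1 j hj])
    · apply Finset.sum_congr rfl
      intro j hj
      rw [div_pow, Real.sq_sqrt (hq j hj)]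
  -- Step: ∑ (-(q f) - g²)/f² ≤ -∑ q/f
  have hstep2 : ∑ j ∈ T, (-(q j) * f j - g j ^ 2) / f j ^ 2 ≤ ∑ j ∈ T, -(q j / f j) := by
    apply Finset.sum_le_sum
    intro j hj
    have hfj := hf0 j hj
    rw [div_le_iff₀ (by positivity)]
    have : -(q j / f j) * f j ^ 2 = -(q j) * f j := by field_simp
    rw [this]
    nlinarith [sq_nonneg (g j)]
  -- combine
  have hfinal : S * (∑ j ∈ T, q j / f j ^ 2) + ∑ j ∈ T, -(q j / f j) ≤ 0 := by
    rw [Finset.mul_sum, ← Finset.sum_add_distrib]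
    apply Finset.sum_nonpos
    intro j hj
    have hfj := hf0 j hj
    have h1 : S * (q j / f j ^ 2) + -(q j / f j) = q j * (S - f j) / f j ^ 2 := by
      field_simp; ring
    rw [h1]
    apply div_nonpos_of_nonpos_of_nonneg
    · exact mul_nonpos_of_nonneg_of_nonpos (hq j hj) (by linarith [hSf j hj])
    · positivity
  linarith


namespace QnumAux16

variable {l r : ℕ}

noncomputable def Ff (c : Fin l → Fin r → ℝ) (α β : Fin r → ℝ) (j : Fin l) (t : ℝ) : ℝ :=
  1 - ∑ k, c j k * Real.exp (α k + t * β k)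

noncomputable def G1 (c : Fin l → Fin r → ℝ) (α β : Fin r → ℝ) (j : Fin l) (t : ℝ) : ℝ :=
  ∑ k, c j k * β k * Real.exp (α k + t * β k)

noncomputable def G2 (c : Fin l → Fin r → ℝ) (α β : Fin r → ℝ) (j : Fin l) (t : ℝ) : ℝ :=
  ∑ k, c j k * β k ^ 2 * Real.exp (α k + t * β k)

noncomputable def U (c : Fin l → Fin r → ℝ) (α β : Fin r → ℝ) (T : Finset (Fin l)) (t : ℝ) : ℝ :=
  ∏ j ∈ T, Ff c α β j t

noncomputable def H1 (c : Fin l → Fin r → ℝ) (α β : Fin r → ℝ) (T : Finset (Fin l)) (t : ℝ) : ℝ :=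
  ∑ j ∈ T, -(G1 c α β j t) / Ff c α β j t

noncomputable def H2 (c : Fin l → Fin r → ℝ) (α β : Fin r → ℝ) (T : Finset (Fin l)) (t : ℝ) : ℝ :=
  ∑ j ∈ T, (-(G2 c α β j t) * Ff c α β j t - (G1 c α β j t) ^ 2) / (Ff c α β j t) ^ 2

variable (c : Fin l → Fin r → ℝ) (α β : Fin r → ℝ) (T : Finset (Fin l))

lemma hasDerivAt_Ff (j : Fin l) (t : ℝ) :
    HasDerivAt (Ff c α β j) (-(G1 c α β j t)) t := by
  have h : ∀ k : Fin r, HasDerivAt (fun t => c j k * Real.exp (α k + t * β k))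
      (c j k * β k * Real.exp (α k + t * β k)) t := by
    intro k
    have h1 : HasDerivAt (fun t : ℝ => α k + t * β k) (β k) t := by
      simpa using (hasDerivAt_mul_const (β k)).const_add (α k)
    have h2 := (h1.exp).const_mul (c j k)
    refine h2.congr_deriv ?_
    ring
  have hsum : HasDerivAt (fun t => ∑ k, c j k * Real.exp (α k + t * β k))
      (∑ k, c j k * β k * Real.exp (α k + t * β k)) t :=
    HasDerivAt.fun_sum (fun k _ => h k)
  have := hsum.const_sub 1
  exact this

lemma hasDerivAt_G1 (j : Fin l) (t : ℝ) :
    HasDerivAt (G1 c α β j) (G2 c α β j t) t := by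
  have h : ∀ k : Fin r, HasDerivAt (fun t => c j k * β k * Real.exp (α k + t * β k))
      (c j k * β k ^ 2 * Real.exp (α k + t * β k)) t := by
    intro k
    have h1 : HasDerivAt (fun t : ℝ => α k + t * β k) (β k) t := by
      simpa using (hasDerivAt_mul_const (β k)).const_add (α k)
    have h2 := (h1.exp).const_mul (c j k * β k)
    refine h2.congr_deriv ?_
    ring
  exact HasDerivAt.fun_sum (fun k _ => h k)

lemma hasDerivAt_U {t : ℝ} (ht : ∀ j ∈ T, Ff c α β j t ≠ 0) :
    HasDerivAt (U c α β T) (U c α β T t * H1 c α β T t) t := by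
  have h := HasDerivAt.fun_finsetProd (u := T) (f := fun j => Ff c α β j)
    (f' := fun j => -(G1 c α β j t)) (fun j _ => hasDerivAt_Ff c α β j t)
  have hval : (∑ j ∈ T, (∏ m ∈ T.erase j, Ff c α β m t) • (-(G1 c α β j t)))
      = U c α β T t * H1 c α β T t := by
    rw [H1, Finset.mul_sum]
    refine Finset.sum_congr rfl (fun j hj => ?_)
    rw [smul_eq_mul]
    have hUj : U c α β T t = Ff c α β j t * ∏ m ∈ T.erase j, Ff c α β m t :=
      (Finset.mul_prod_erase T (fun m => Ff c α β m t) hj).symm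
    rw [hUj]
    have := ht j hj
    field_simp
  rw [← hval]
  exact h

lemma hasDerivAt_H1 {t : ℝ} (ht : ∀ j ∈ T, Ff c α β j t ≠ 0) :
    HasDerivAt (H1 c α β T) (H2 c α β T t) t := by
  refine HasDerivAt.fun_sum (fun j hj => ?_)
  have h := HasDerivAt.div ((hasDerivAt_G1 c α β j t).neg) (hasDerivAt_Ff c α β j t) (ht j hj)
  refine h.congr_deriv ?_
  simp only [Pi.neg_apply]
  ring



/-- Weighted AM–GM over a product: `(∏f)^a (∏g)^b ≤ ∏h` when `a f + b g ≤ h` pointwise. -/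
lemma prod_combo {ι : Type*} (T : Finset ι) (f g h : ι → ℝ) (a b : ℝ)
    (ha : 0 ≤ a) (hb : 0 ≤ b) (hab : a + b = 1)
    (hf : ∀ j ∈ T, 0 ≤ f j) (hg : ∀ j ∈ T, 0 ≤ g j)
    (hh : ∀ j ∈ T, a * f j + b * g j ≤ h j) :
    (∏ j ∈ T, f j) ^ a * (∏ j ∈ T, g j) ^ b ≤ ∏ j ∈ T, h j := by
  rw [← Real.finset_prod_rpow T f hf a, ← Real.finset_prod_rpow T g hg b,
    ← Finset.prod_mul_distrib]
  refine Finset.prod_le_prod (fun j hj => mul_nonneg (Real.rpow_nonneg (hf j hj) a) (Real.rpow_nonneg (hg j hj) b)) (fun j hj => ?_)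
  exact (Real.geom_mean_le_arith_mean2_weighted ha hb (hf j hj) (hg j hj) hab).trans (hh j hj)

lemma sum_exp_combo {r : ℕ} (w : Fin r → ℝ) (hw : ∀ k, 0 ≤ w k) (p q : Fin r → ℝ)
    (a b : ℝ) (ha : 0 ≤ a) (hb : 0 ≤ b) (hab : a + b = 1) :
    ∑ k, w k * Real.exp (a * p k + b * q k)
      ≤ a * ∑ k, w k * Real.exp (p k) + b * ∑ k, w k * Real.exp (q k) := by
  rw [Finset.mul_sum, Finset.mul_sum, ← Finset.sum_add_distrib]
  refine Finset.sum_le_sum fun k _ => ?_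
  have hexp := convexOn_exp.2 (Set.mem_univ (p k)) (Set.mem_univ (q k)) ha hb hab
  simp only [smul_eq_mul] at hexp
  nlinarith [hw k, Real.exp_pos (a * p k + b * q k)]

variable {l r : ℕ} (c : Fin l → Fin r → ℝ) (α β : Fin r → ℝ) (T : Finset (Fin l))

lemma Ff_combo (hc : ∀ j k, 0 ≤ c j k) (j : Fin l) {t : ℝ} (ht : t ∈ Set.Icc (0:ℝ) 1) :
    (1 - t) * Ff c α β j 0 + t * Ff c α β j 1 ≤ Ff c α β j t := by
  have h := sum_exp_combo (c j) (hc j) (fun k => α k + 0 * β k) (fun k => α k + 1 * β k)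
    (1 - t) t (by linarith [ht.2]) ht.1 (by ring)
  have harg : ∑ k, c j k * Real.exp ((1 - t) * (α k + 0 * β k) + t * (α k + 1 * β k))
      = ∑ k, c j k * Real.exp (α k + t * β k) := by
    refine Finset.sum_congr rfl fun k _ => ?_
    rw [show (1 - t) * (α k + 0 * β k) + t * (α k + 1 * β k) = α k + t * β k by ring]
  rw [harg] at h
  simp only [Ff]
  linarith

lemma Ff_le_one (hc : ∀ j k, 0 ≤ c j k) (j : Fin l) (t : ℝ) : Ff c α β j t ≤ 1 := by
  have : (0:ℝ) ≤ ∑ k, c j k * Real.exp (α k + t * β k) :=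
    Finset.sum_nonneg fun k _ => mul_nonneg (hc j k) (Real.exp_pos _).le
  simp only [Ff]; linarith

lemma feas (hc : ∀ j k, 0 ≤ c j k)
    (h0 : ∀ j ∈ T, 0 < Ff c α β j 0) (h1 : ∀ j ∈ T, 0 < Ff c α β j 1)
    (hu0 : (1:ℝ)/2 ≤ U c α β T 0) (hu1 : (1:ℝ)/2 ≤ U c α β T 1) :
    ∀ t ∈ Set.Icc (0:ℝ) 1, (∀ j ∈ T, 0 < Ff c α β j t) ∧ (1:ℝ)/2 ≤ U c α β T t := by
  intro t ht
  have hFpos : ∀ j ∈ T, 0 < Ff c α β j t := by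
    intro j hj
    have hcomb := Ff_combo c α β hc j ht
    rcases eq_or_lt_of_le ht.1 with h | h
    · have : (1 - t) * Ff c α β j 0 + t * Ff c α β j 1 = Ff c α β j 0 := by
        rw [← h]; ring
      nlinarith [h0 j hj]
    · nlinarith [mul_nonneg (by linarith [ht.2] : (0:ℝ) ≤ 1 - t) (h0 j hj).le,
        mul_pos h (h1 j hj)]
  refine ⟨hFpos, ?_⟩
  have hprod := prod_combo T (fun j => Ff c α β j 0) (fun j => Ff c α β j 1)
    (fun j => Ff c α β j t) (1 - t) t (by linarith [ht.2]) ht.1 (by ring)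
    (fun j hj => (h0 j hj).le) (fun j hj => (h1 j hj).le)
    (fun j hj => Ff_combo c α β hc j ht)
  have hhalf : (1:ℝ)/2 = ((1:ℝ)/2) ^ (1 - t) * ((1:ℝ)/2) ^ t := by
    rw [← Real.rpow_add (by norm_num : (0:ℝ) < 1/2)]
    rw [show (1 - t) + t = 1 by ring, Real.rpow_one]
  have hmul : ((1:ℝ)/2) ^ (1 - t) * ((1:ℝ)/2) ^ t
      ≤ (∏ j ∈ T, Ff c α β j 0) ^ (1 - t) * (∏ j ∈ T, Ff c α β j 1) ^ t := by
    have h1' : ((1:ℝ)/2) ^ (1 - t) ≤ (∏ j ∈ T, Ff c α β j 0) ^ (1 - t) :=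
      Real.rpow_le_rpow (by norm_num) hu0 (by linarith [ht.2])
    have h2' : ((1:ℝ)/2) ^ t ≤ (∏ j ∈ T, Ff c α β j 1) ^ t :=
      Real.rpow_le_rpow (by norm_num) hu1 ht.1
    have := Real.rpow_nonneg (by norm_num : (0:ℝ) ≤ 1/2) t
    have := Real.rpow_nonneg (by norm_num : (0:ℝ) ≤ 1/2) (1 - t)
    nlinarith [Real.rpow_nonneg (Finset.prod_nonneg fun j hj => (h0 j hj).le) (1 - t)]
  calc (1:ℝ)/2 = ((1:ℝ)/2) ^ (1 - t) * ((1:ℝ)/2) ^ t := hhalf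
    _ ≤ (∏ j ∈ T, Ff c α β j 0) ^ (1 - t) * (∏ j ∈ T, Ff c α β j 1) ^ t := hmul
    _ ≤ ∏ j ∈ T, Ff c α β j t := hprod
    _ = U c α β T t := rfl


set_option maxHeartbeats 1000000 in
lemma core (hc : ∀ j k, 0 ≤ c j k) (i : Fin r)
    (h0 : ∀ j ∈ T, 0 < Ff c α β j 0) (h1 : ∀ j ∈ T, 0 < Ff c α β j 1)
    (hu0 : (1:ℝ)/2 ≤ U c α β T 0) (hu1 : (1:ℝ)/2 ≤ U c α β T 1) :
    ConvexOn ℝ (Set.Icc (0:ℝ) 1)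
      (fun t => -(α i + t * β i) - Real.log ((1 + U c α β T t)/2)) := by
  have hfeas := feas c α β T hc h0 h1 hu0 hu1
  have hUpos : ∀ t ∈ Set.Icc (0:ℝ) 1, 0 < U c α β T t := fun t ht =>
    lt_of_lt_of_le (by norm_num : (0:ℝ) < 1/2) ((hfeas t ht).2)
  have hFcont : ∀ j, Continuous (Ff c α β j) := by
    intro j; unfold Ff
    exact continuous_const.sub (continuous_finset_sum _ fun k _ =>
      continuous_const.mul (Real.continuous_exp.comp
        (continuous_const.add (continuous_id.mul continuous_const))))
  have hUcont : Continuous (U c α β T) := by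
    unfold U; exact continuous_finset_prod _ fun j _ => hFcont j
  have hcont : ContinuousOn
      (fun t => -(α i + t * β i) - Real.log ((1 + U c α β T t)/2)) (Set.Icc 0 1) := by
    apply ContinuousOn.sub
    · exact ((continuous_const.add (continuous_id.mul continuous_const)).neg).continuousOn
    · apply ContinuousOn.log
      · exact ((continuous_const.add hUcont).div_const 2).continuousOn
      · intro t ht
        have := hUpos t ht; positivity
  refine convexOn_of_hasDerivWithinAt2_nonneg
    (f' := fun t => -β i - (U c α β T t * H1 c α β T t / 2)/((1 + U c α β T t)/2))
    (f'' := fun t => ((U c α β T t)^2 * (H1 c α β T t)^2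
      - U c α β T t * ((H1 c α β T t)^2 + H2 c α β T t) * (1 + U c α β T t))
      / (1 + U c α β T t)^2)
    (convex_Icc 0 1) hcont ?_ ?_ ?_
  · intro t ht
    rw [interior_Icc] at ht
    have htI : t ∈ Set.Icc (0:ℝ) 1 := ⟨ht.1.le, ht.2.le⟩
    have hne : ∀ j ∈ T, Ff c α β j t ≠ 0 := fun j hj => ((hfeas t htI).1 j hj).ne'
    have hU := hasDerivAt_U c α β T hne
    have hA : HasDerivAt (fun s : ℝ => -(α i + s * β i)) (-β i) t :=
      ((hasDerivAt_mul_const (β i)).const_add (α i)).neg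
    have hDen : HasDerivAt (fun s => (1 + U c α β T s)/2)
        ((U c α β T t * H1 c α β T t)/2) t := (hU.const_add 1).div_const 2
    have hden_ne : (1 + U c α β T t)/2 ≠ 0 := by have := hUpos t htI; positivity
    have hlog := hDen.log hden_ne
    exact (hA.sub hlog).hasDerivWithinAt
  · intro t ht
    rw [interior_Icc] at ht
    have htI : t ∈ Set.Icc (0:ℝ) 1 := ⟨ht.1.le, ht.2.le⟩
    have hne : ∀ j ∈ T, Ff c α β j t ≠ 0 := fun j hj => ((hfeas t htI).1 j hj).ne'
    have hU := hasDerivAt_U c α β T hne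
    have hH1 := hasDerivAt_H1 c α β T hne
    have hN : HasDerivAt (fun s => U c α β T s * H1 c α β T s / 2)
        ((U c α β T t * H1 c α β T t * H1 c α β T t + U c α β T t * H2 c α β T t)/2) t :=
      (hU.mul hH1).div_const 2
    have hDen : HasDerivAt (fun s => (1 + U c α β T s)/2)
        ((U c α β T t * H1 c α β T t)/2) t := (hU.const_add 1).div_const 2
    have hden_ne : (1 + U c α β T t)/2 ≠ 0 := by have := hUpos t htI; positivity
    have hQ := hN.div hDen hden_ne
    have hPsi1 := hQ.const_sub (-β i)
    refine (HasDerivAt.hasDerivWithinAt ?_)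
    have hne1 : (1 + U c α β T t) ≠ 0 := by have := hUpos t htI; positivity
    set u0 := U c α β T t with hu0eq
    set p1 := H1 c α β T t with hp1eq
    set p2 := H2 c α β T t with hp2eq
    convert hPsi1 using 1
    · funext s; rfl
    · field_simp; ring
  · intro t ht
    rw [interior_Icc] at ht
    have htI : t ∈ Set.Icc (0:ℝ) 1 := ⟨ht.1.le, ht.2.le⟩
    have hf0 : ∀ j ∈ T, 0 < Ff c α β j t := (hfeas t htI).1
    have hf1 : ∀ j ∈ T, Ff c α β j t ≤ 1 := fun j _ => Ff_le_one c α β hc j t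
    have hq : ∀ j ∈ T, 0 ≤ G2 c α β j t := fun j _ => Finset.sum_nonneg fun k _ =>
      mul_nonneg (mul_nonneg (hc j k) (sq_nonneg _)) (Real.exp_pos _).le
    have hcs : ∀ j ∈ T, (-(G1 c α β j t))^2 ≤ (1 - Ff c α β j t) * G2 c α β j t := by
      intro j hj
      have h := cs_link (c j) β (fun k => Real.exp (α k + t * β k))
        (fun k => mul_nonneg (hc j k) (Real.exp_pos _).le)
      have hrw : 1 - Ff c α β j t = ∑ k, c j k * Real.exp (α k + t * β k) := by
        simp [Ff]
      rw [neg_sq, hrw]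
      exact h
    have hkey := key_ineq T (fun j => Ff c α β j t) (fun j => -(G1 c α β j t))
      (fun j => G2 c α β j t) hf0 hf1 hq hcs (hfeas t htI).2
    simp only [neg_sq] at hkey
    have hkey' : (H1 c α β T t)^2 + H2 c α β T t ≤ 0 := by
      rw [H1, H2]; exact hkey
    have hU0 : 0 < U c α β T t := hUpos t htI
    set u0 := U c α β T t with hu0eq
    set p1 := H1 c α β T t with hp1eq
    set p2 := H2 c α β T t with hp2eq
    have h1U : (0:ℝ) < 1 + u0 := by linarith
    apply div_nonneg _ (sq_nonneg _)
    have hP : u0 * (p1^2 + p2) ≤ 0 := by nlinarith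
    have hP2 : u0 * (p1^2 + p2) * (1 + u0) ≤ 0 := by nlinarith
    nlinarith [sq_nonneg (u0 * p1)]

end QnumAux16



set_option maxHeartbeats 1000000 in
/-- a route using the success probability of teleportation
`f_succ(ω) = (1+ω)/2` as its entanglement measure contributes a convex term
`y ↦ −y_i − ln((1 + u_i(y))/2)` to the transformed QNUM objective, on the region
where the end-to-end Werner parameter `u_i(y)` exceeds `1/2`. -/
theorem teleportation_contribution_convex_in_log_rates
    (l r : ℕ) (hl : 0 < l) (hr : 0 < r)
    (A : Fin l → Fin r → ℝ) (hA : ∀ j i, A j i = 0 ∨ A j i = 1)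
    (d : Fin l → ℝ) (hd : ∀ j, 0 < d j) (i : Fin r) :
    ConvexOn ℝ
      { y : Fin r → ℝ |
        (∀ j, ∑ k, A j k * Real.exp (y k) < d j) ∧
        1 / 2 < ∏ j ∈ Finset.univ.filter (fun j => A j i = 1),
            (1 - (∑ k, A j k * Real.exp (y k)) / d j) }
      (fun y => -(y i) -
        Real.log ((1 + ∏ j ∈ Finset.univ.filter (fun j => A j i = 1),
            (1 - (∑ k, A j k * Real.exp (y k)) / d j)) / 2)) := by
  classical
  set T := Finset.univ.filter (fun j => A j i = 1) with hT
  set c : Fin l → Fin r → ℝ := fun j k => A j k / d j with hcdef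
  have hc : ∀ j k, 0 ≤ c j k := by
    intro j k
    rcases hA j k with h | h
    · simp [hcdef, h]
    · simp only [hcdef, h]
      exact div_nonneg zero_le_one (hd j).le
  have hAnn : ∀ j k, 0 ≤ A j k := by
    intro j k; rcases hA j k with h | h <;> rw [h] <;> norm_num
  constructor
  · -- Convexity of the region
    intro p hp q hq a b ha hb hab
    simp only [Set.mem_setOf_eq] at hp hq ⊢
    rcases ha.eq_or_lt with h | hapos
    · have hb1 : b = 1 := by linarith
      rw [← h, hb1, zero_smul, one_smul, zero_add]
      exact hq
    rcases hb.eq_or_lt with h | hbpos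
    · have ha1 : a = 1 := by linarith
      rw [← h, ha1, zero_smul, one_smul, add_zero]
      exact hp
    have hzk : ∀ k, (a • p + b • q) k = a * p k + b * q k := fun k => by
      simp [Pi.add_apply, Pi.smul_apply, smul_eq_mul]
    have hσ : ∀ j, ∑ k, A j k * Real.exp ((a • p + b • q) k)
        ≤ a * ∑ k, A j k * Real.exp (p k) + b * ∑ k, A j k * Real.exp (q k) := by
      intro j
      have hcomb := QnumAux16.sum_exp_combo (A j) (hAnn j) p q a b ha hb hab
      calc ∑ k, A j k * Real.exp ((a • p + b • q) k)
          = ∑ k, A j k * Real.exp (a * p k + b * q k) :=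
            Finset.sum_congr rfl fun k _ => by rw [hzk k]
        _ ≤ _ := hcomb
    refine ⟨fun j => ?_, ?_⟩
    · calc ∑ k, A j k * Real.exp ((a • p + b • q) k)
          ≤ a * ∑ k, A j k * Real.exp (p k) + b * ∑ k, A j k * Real.exp (q k) := hσ j
        _ < a * d j + b * d j :=
            add_lt_add (mul_lt_mul_of_pos_left (hp.1 j) hapos)
              (mul_lt_mul_of_pos_left (hq.1 j) hbpos)
        _ = d j := by rw [← add_mul, hab, one_mul]
    · -- strict product bound
      have hFppos : ∀ j, 0 < 1 - (∑ k, A j k * Real.exp (p k)) / d j := by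
        intro j
        have := (div_lt_one (hd j)).2 (hp.1 j); linarith
      have hFqpos : ∀ j, 0 < 1 - (∑ k, A j k * Real.exp (q k)) / d j := by
        intro j
        have := (div_lt_one (hd j)).2 (hq.1 j); linarith
      have hcombF : ∀ j ∈ T,
          a * (1 - (∑ k, A j k * Real.exp (p k)) / d j)
            + b * (1 - (∑ k, A j k * Real.exp (q k)) / d j)
          ≤ 1 - (∑ k, A j k * Real.exp ((a • p + b • q) k)) / d j := by
        intro j _
        have h1 : (∑ k, A j k * Real.exp ((a • p + b • q) k)) / d j
            ≤ (a * ∑ k, A j k * Real.exp (p k) + b * ∑ k, A j k * Real.exp (q k)) / d j := by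
          gcongr <;> first | exact hσ j | exact (hd j).le
        rw [add_div, mul_div_assoc, mul_div_assoc] at h1
        nlinarith [h1]
      have hprod := QnumAux16.prod_combo T
        (fun j => 1 - (∑ k, A j k * Real.exp (p k)) / d j)
        (fun j => 1 - (∑ k, A j k * Real.exp (q k)) / d j)
        (fun j => 1 - (∑ k, A j k * Real.exp ((a • p + b • q) k)) / d j)
        a b ha hb hab (fun j _ => (hFppos j).le) (fun j _ => (hFqpos j).le) hcombF
      have hhalf : (1:ℝ)/2 = ((1:ℝ)/2) ^ a * ((1:ℝ)/2) ^ b := by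
        rw [← Real.rpow_add (by norm_num : (0:ℝ) < 1/2), hab, Real.rpow_one]
      have hstrict : ((1:ℝ)/2) ^ a * ((1:ℝ)/2) ^ b
          < (∏ j ∈ T, (1 - (∑ k, A j k * Real.exp (p k)) / d j)) ^ a
            * (∏ j ∈ T, (1 - (∑ k, A j k * Real.exp (q k)) / d j)) ^ b :=
        mul_lt_mul'' (Real.rpow_lt_rpow (by norm_num) hp.2 hapos)
          (Real.rpow_lt_rpow (by norm_num) hq.2 hbpos)
          (Real.rpow_nonneg (by norm_num) a) (Real.rpow_nonneg (by norm_num) b)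
      calc (1:ℝ)/2 = ((1:ℝ)/2) ^ a * ((1:ℝ)/2) ^ b := hhalf
        _ < _ := hstrict
        _ ≤ ∏ j ∈ T, (1 - (∑ k, A j k * Real.exp ((a • p + b • q) k)) / d j) := hprod
  · -- The convexity inequality
    intro x hx y hy a b ha hb hab
    simp only [Set.mem_setOf_eq] at hx hy
    rcases ha.eq_or_lt with h | hapos
    · have hb1 : b = 1 := by linarith
      simp only [← h, hb1, zero_smul, one_smul, zero_add]
      exact le_refl _
    rcases hb.eq_or_lt with h | hbpos
    · have ha1 : a = 1 := by linarith
      simp only [← h, ha1, zero_smul, one_smul, add_zero]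
      exact le_refl _
    have haeq : a = 1 - b := by linarith
    have hk0 : ∀ k, x k + (0:ℝ) * (y k - x k) = x k := fun k => by ring
    have hk1 : ∀ k, x k + (1:ℝ) * (y k - x k) = y k := fun k => by ring
    have hkb : ∀ k, x k + b * (y k - x k) = (a • x + b • y) k := fun k => by
      simp only [Pi.add_apply, Pi.smul_apply, smul_eq_mul]
      rw [haeq]; ring
    have hFf : ∀ (z : Fin r → ℝ) (t : ℝ), (∀ k, x k + t * (y k - x k) = z k) →
        ∀ j, QnumAux16.Ff c x (fun k => y k - x k) j t
          = 1 - (∑ k, A j k * Real.exp (z k)) / d j := by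
      intro z t hzk j
      rw [QnumAux16.Ff, Finset.sum_div]
      congr 1
      refine Finset.sum_congr rfl fun k _ => ?_
      rw [hzk k]
      simp only [hcdef]
      rw [div_mul_eq_mul_div]
    have hUeq : ∀ (z : Fin r → ℝ) (t : ℝ), (∀ k, x k + t * (y k - x k) = z k) →
        QnumAux16.U c x (fun k => y k - x k) T t
          = ∏ j ∈ T, (1 - (∑ k, A j k * Real.exp (z k)) / d j) := by
      intro z t hzk
      rw [QnumAux16.U]
      exact Finset.prod_congr rfl fun j _ => hFf z t hzk j
    have h0' : ∀ j ∈ T, 0 < QnumAux16.Ff c x (fun k => y k - x k) j 0 := by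
      intro j _
      rw [hFf x 0 hk0 j]
      have := (div_lt_one (hd j)).2 (hx.1 j); linarith
    have h1' : ∀ j ∈ T, 0 < QnumAux16.Ff c x (fun k => y k - x k) j 1 := by
      intro j _
      rw [hFf y 1 hk1 j]
      have := (div_lt_one (hd j)).2 (hy.1 j); linarith
    have hu0' : (1:ℝ)/2 ≤ QnumAux16.U c x (fun k => y k - x k) T 0 := by
      rw [hUeq x 0 hk0]; exact hx.2.le
    have hu1' : (1:ℝ)/2 ≤ QnumAux16.U c x (fun k => y k - x k) T 1 := by
      rw [hUeq y 1 hk1]; exact hy.2.le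
    have hcore := QnumAux16.core c x (fun k => y k - x k) T hc i h0' h1' hu0' hu1'
    have hineq := hcore.2 (Set.mem_Icc.2 ⟨le_refl (0:ℝ), zero_le_one⟩)
      (Set.mem_Icc.2 ⟨zero_le_one, le_refl (1:ℝ)⟩) ha hb hab
    simp only [smul_eq_mul, mul_zero, mul_one, zero_add, zero_mul, one_mul, add_zero] at hineq
    -- rewrite the goal into `U`-form
    simp only [smul_eq_mul]
    rw [← hUeq (a • x + b • y) b hkb, ← hUeq x 0 hk0, ← hUeq y 1 hk1]
    have hi : (a • x + b • y) i = x i + b * (y i - x i) := (hkb i).symm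
    rw [hi]
    have hyy : x i + (y i - x i) = y i := by ring
    rw [hyy] at hineq
    linarith [hineq]
end
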